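/- arXiv:2303.15660 — 12 statements merged into one kernel-verified Lean document; each statement's English description precedes it below -/
import Mathlib

section
/- Let A=[a_1,...,a_n] and B=[b_1,...,b_n] be two sequences of distinct points in a linear order, both strictly increasing (or both strictly decreasing), with a_i < b_i for all i (order consistent). Suppose that for each pair i≠j, the pairs (a_i,b_i) and (a_j,b_j) do not cross. Then the sequences strongly interleave: a_1 < b_1 < a_2 < b_2 < ... < a_n < b_n (in the increasing case). -/
variable {α : Type*}

/-- Edges `(a,b)` and `(c,d)`, written with `a < b` and `c < d`, cross. -/
def Crosses [LinearOrder α] (a b c d : α) : Prop :=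
  (a < c ∧ c < b ∧ b < d) ∨ (c < a ∧ a < d ∧ d < b)

/-- Two order-consistent strictly increasing sequences of distinct points whose
matching pairs pairwise do not cross must strongly interleave:
`a 0 < b 0 < a 1 < b 1 < ⋯`. -/
theorem stmt1 [LinearOrder α] {n : ℕ} (a b : Fin n → α)
    (ha : StrictMono a) (hb : StrictMono b)
    (hdist : ∀ i j : Fin n, a i ≠ b j)
    (hoc : ∀ i, a i < b i)
    (hnc : ∀ i j : Fin n, i ≠ j → ¬ Crosses (a i) (b i) (a j) (b j)) :
    (∀ i, a i < b i) ∧ ∀ i j : Fin n, (i : ℕ) + 1 = (j : ℕ) → b i < a j := by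
  refine ⟨hoc, fun i j hij => ?_⟩
  have hlt : i < j := Fin.lt_def.mpr (by omega)
  have h1 : a i < a j := ha hlt
  have h2 : b i < b j := hb hlt
  have hne : i ≠ j := ne_of_lt hlt
  have h := hnc i j hne
  rcases lt_or_gt_of_ne (hdist j i).symm with h3 | h3
  · exact h3
  · exact absurd (Or.inl ⟨h1, h3, h2⟩) h
end

section
/- Let A, B, C be three sequences of points in a linear order, all monotone in the same direction and all of length n. If A and B strongly interleave, and B and C strongly interleave, then A and C are (⌈n/2⌉−1)-interleaving: there exist subsequences A' of A and C' of C, each of length ⌈n/2⌉−1, that strongly interleave. -/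
variable {α : Type*}

def AltUp [LinearOrder α] {n : ℕ} (a b : Fin n → α) : Prop :=
  (∀ i, a i < b i) ∧ ∀ i j : Fin n, (i : ℕ) + 1 = (j : ℕ) → b i < a j

def AltDown [LinearOrder α] {n : ℕ} (a b : Fin n → α) : Prop :=
  (∀ i, b i < a i) ∧ ∀ i j : Fin n, (i : ℕ) + 1 = (j : ℕ) → a j < b i

/-- Two equal-length sequences strongly interleave: their elements strictly
alternate in the linear order (in one of the four possible patterns). -/
def StrongInt [LinearOrder α] {n : ℕ} (a b : Fin n → α) : Prop :=
  AltUp a b ∨ AltUp b a ∨ AltDown a b ∨ AltDown b a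

/-- Two sequences are monotone in the same direction. -/
def SameDir [LinearOrder α] {n m : ℕ} (a : Fin n → α) (b : Fin m → α) : Prop :=
  (StrictMono a ∧ StrictMono b) ∨ (StrictAnti a ∧ StrictAnti b)

/-- Two sequences `k`-interleave: they are monotone in the same direction and
admit length-`k` subsequences that strongly interleave. -/
def KInterleave [LinearOrder α] (k : ℕ) {n m : ℕ} (a : Fin n → α) (b : Fin m → α) : Prop :=
  SameDir a b ∧ ∃ f : Fin k → Fin n, ∃ g : Fin k → Fin m,
    StrictMono f ∧ StrictMono g ∧ StrongInt (a ∘ f) (b ∘ g)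

/-- The (unordered) edges `{x,y}` and `{z,w}` cross with respect to the linear order. -/
def EdgeCross [LinearOrder α] (x y z w : α) : Prop :=
  (min x y < min z w ∧ min z w < max x y ∧ max x y < max z w) ∨
  (min z w < min x y ∧ min x y < max z w ∧ max z w < max x y)

/-- The rainbow configuration: the sequences are monotone in opposite directions
and totally separated. -/
def RainbowPat [LinearOrder α] {n : ℕ} (a b : Fin n → α) : Prop :=
  ((StrictMono a ∧ StrictAnti b) ∨ (StrictAnti a ∧ StrictMono b)) ∧
  ((∀ i j, a i < b j) ∨ (∀ i j, b j < a i))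

section aux

variable [LinearOrder α] {n : ℕ}

private lemma build1 (a c : Fin n → α) (k : ℕ) (hk : 2 * k ≤ n)
    (hca : ∀ i j : Fin n, (i : ℕ) + 1 = (j : ℕ) → c i < a j)
    (hac : ∀ i j : Fin n, (i : ℕ) + 1 = (j : ℕ) → a i < c j) :
    ∃ f g : Fin k → Fin n, StrictMono f ∧ StrictMono g ∧ StrongInt (a ∘ f) (c ∘ g) := by
  refine ⟨fun t => ⟨2 * t + 1, by have := t.isLt; omega⟩,
          fun t => ⟨2 * t, by have := t.isLt; omega⟩, ?_, ?_, ?_⟩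
  · intro i j hij
    simp only [Fin.lt_def] at *
    omega
  · intro i j hij
    simp only [Fin.lt_def] at *
    omega
  · refine Or.inr (Or.inl ⟨fun t => ?_, fun t s hts => ?_⟩)
    · exact hca _ _ rfl
    · refine hac _ _ ?_
      show 2 * (t : ℕ) + 1 + 1 = 2 * (s : ℕ)
      have : (t : ℕ) + 1 = (s : ℕ) := hts
      omega

private lemma build2 (a c : Fin n → α) (k : ℕ) (hk : 2 * k ≤ n + 1)
    (h0 : ∀ i, a i < c i)
    (hgap : ∀ i j : Fin n, (i : ℕ) + 2 = (j : ℕ) → c i < a j) :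
    ∃ f g : Fin k → Fin n, StrictMono f ∧ StrictMono g ∧ AltUp (a ∘ f) (c ∘ g) := by
  refine ⟨fun t => ⟨2 * t, by have := t.isLt; omega⟩,
          fun t => ⟨2 * t, by have := t.isLt; omega⟩, ?_, ?_, ?_⟩
  · intro i j hij
    simp only [Fin.lt_def] at *
    omega
  · intro i j hij
    simp only [Fin.lt_def] at *
    omega
  · refine ⟨fun t => h0 _, fun t s hts => ?_⟩
    refine hgap _ _ ?_
    show 2 * (t : ℕ) + 2 = 2 * (s : ℕ)
    have : (t : ℕ) + 1 = (s : ℕ) := hts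
    omega

private lemma build1down (a c : Fin n → α) (k : ℕ) (hk : 2 * k ≤ n)
    (hac : ∀ i j : Fin n, (i : ℕ) + 1 = (j : ℕ) → a j < c i)
    (hca : ∀ i j : Fin n, (i : ℕ) + 1 = (j : ℕ) → c j < a i) :
    ∃ f g : Fin k → Fin n, StrictMono f ∧ StrictMono g ∧ StrongInt (a ∘ f) (c ∘ g) := by
  refine ⟨fun t => ⟨2 * t + 1, by have := t.isLt; omega⟩,
          fun t => ⟨2 * t, by have := t.isLt; omega⟩, ?_, ?_, ?_⟩
  · intro i j hij
    simp only [Fin.lt_def] at *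
    omega
  · intro i j hij
    simp only [Fin.lt_def] at *
    omega
  · refine Or.inr (Or.inr (Or.inr ⟨fun t => ?_, fun t s hts => ?_⟩))
    · exact hac _ _ rfl
    · refine hca _ _ ?_
      show 2 * (t : ℕ) + 1 + 1 = 2 * (s : ℕ)
      have : (t : ℕ) + 1 = (s : ℕ) := hts
      omega

private lemma build2down (a c : Fin n → α) (k : ℕ) (hk : 2 * k ≤ n + 1)
    (h0 : ∀ i, c i < a i)
    (hgap : ∀ i j : Fin n, (i : ℕ) + 2 = (j : ℕ) → a j < c i) :
    ∃ f g : Fin k → Fin n, StrictMono f ∧ StrictMono g ∧ AltDown (a ∘ f) (c ∘ g) := by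
  refine ⟨fun t => ⟨2 * t, by have := t.isLt; omega⟩,
          fun t => ⟨2 * t, by have := t.isLt; omega⟩, ?_, ?_, ?_⟩
  · intro i j hij
    simp only [Fin.lt_def] at *
    omega
  · intro i j hij
    simp only [Fin.lt_def] at *
    omega
  · refine ⟨fun t => h0 _, fun t s hts => ?_⟩
    refine hgap _ _ ?_
    show 2 * (t : ℕ) + 2 = 2 * (s : ℕ)
    have : (t : ℕ) + 1 = (s : ℕ) := hts
    omega

private lemma upCase (a b c : Fin n → α) (k : ℕ) (hk : 2 * k ≤ n)
    (h1 : AltUp a b ∨ AltUp b a) (h2 : AltUp b c ∨ AltUp c b) :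
    ∃ f g : Fin k → Fin n, StrictMono f ∧ StrictMono g ∧ StrongInt (a ∘ f) (c ∘ g) := by
  rcases h1 with ⟨h11, h12⟩ | ⟨h11, h12⟩ <;> rcases h2 with ⟨h21, h22⟩ | ⟨h21, h22⟩
  · -- AltUp a b, AltUp b c
    obtain ⟨f, g, hf, hg, h⟩ := build2 a c k (by omega) (fun i => (h11 i).trans (h21 i))
      (fun i j hij => by
        have hj := j.isLt
        have hm : (i : ℕ) + 1 < n := by omega
        exact (h22 i ⟨(i : ℕ) + 1, hm⟩ rfl).trans (h12 ⟨(i : ℕ) + 1, hm⟩ j (by simpa using by omega)))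
    exact ⟨f, g, hf, hg, Or.inl h⟩
  · -- AltUp a b, AltUp c b
    exact build1 a c k hk (fun i j hij => (h21 i).trans (h12 i j hij))
      (fun i j hij => (h11 i).trans (h22 i j hij))
  · -- AltUp b a, AltUp b c
    exact build1 a c k hk (fun i j hij => (h22 i j hij).trans (h11 j))
      (fun i j hij => (h12 i j hij).trans (h21 j))
  · -- AltUp b a, AltUp c b
    obtain ⟨f, g, hf, hg, h⟩ := build2 c a k (by omega) (fun i => (h21 i).trans (h11 i))
      (fun i j hij => by
        have hj := j.isLt
        have hm : (i : ℕ) + 1 < n := by omega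
        exact (h12 i ⟨(i : ℕ) + 1, hm⟩ rfl).trans (h22 ⟨(i : ℕ) + 1, hm⟩ j (by simpa using by omega)))
    exact ⟨g, f, hg, hf, Or.inr (Or.inl h)⟩

private lemma downCase (a b c : Fin n → α) (k : ℕ) (hk : 2 * k ≤ n)
    (h1 : AltDown a b ∨ AltDown b a) (h2 : AltDown b c ∨ AltDown c b) :
    ∃ f g : Fin k → Fin n, StrictMono f ∧ StrictMono g ∧ StrongInt (a ∘ f) (c ∘ g) := by
  rcases h1 with ⟨h11, h12⟩ | ⟨h11, h12⟩ <;> rcases h2 with ⟨h21, h22⟩ | ⟨h21, h22⟩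
  · -- AltDown a b, AltDown b c
    obtain ⟨f, g, hf, hg, h⟩ := build2down a c k (by omega) (fun i => (h21 i).trans (h11 i))
      (fun i j hij => by
        have hj := j.isLt
        have hm : (i : ℕ) + 1 < n := by omega
        exact (h12 ⟨(i : ℕ) + 1, hm⟩ j (by simpa using by omega)).trans (h22 i ⟨(i : ℕ) + 1, hm⟩ rfl))
    exact ⟨f, g, hf, hg, Or.inr (Or.inr (Or.inl h))⟩
  · -- AltDown a b, AltDown c b
    exact build1down a c k hk (fun i j hij => (h12 i j hij).trans (h21 i))
      (fun i j hij => (h22 i j hij).trans (h11 i))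
  · -- AltDown b a, AltDown b c
    exact build1down a c k hk (fun i j hij => (h11 j).trans (h22 i j hij))
      (fun i j hij => (h21 j).trans (h12 i j hij))
  · -- AltDown b a, AltDown c b
    obtain ⟨f, g, hf, hg, h⟩ := build2down c a k (by omega) (fun i => (h11 i).trans (h21 i))
      (fun i j hij => by
        have hj := j.isLt
        have hm : (i : ℕ) + 1 < n := by omega
        exact (h22 ⟨(i : ℕ) + 1, hm⟩ j (by simpa using by omega)).trans (h12 i ⟨(i : ℕ) + 1, hm⟩ rfl))
    exact ⟨g, f, hg, hf, Or.inr (Or.inr (Or.inr h))⟩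

end aux

/-- If `a,b,c` are monotone in the same direction, `a,b` strongly interleave and
`b,c` strongly interleave, then `a` and `c` `(⌈n/2⌉ - 1)`-interleave. -/
theorem stmt4 [LinearOrder α] {n : ℕ} (a b c : Fin n → α)
    (hab : SameDir a b) (hbc : SameDir b c)
    (h1 : StrongInt a b) (h2 : StrongInt b c) :
    KInterleave ((n + 1) / 2 - 1) a c := by
  set k := (n + 1) / 2 - 1 with hkdef
  by_cases hn : n ≤ 1
  · -- trivial case: Fin n is subsingleton and k = 0
    have hk0 : k = 0 := by omega
    have hmono : ∀ (x : Fin n → α), StrictMono x := by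
      intro x i j hij
      exact absurd (Fin.lt_def.mp hij) (by have := i.isLt; have := j.isLt; omega)
    refine ⟨Or.inl ⟨hmono a, hmono c⟩, ?_⟩
    rw [hk0]
    exact ⟨Fin.elim0, Fin.elim0, fun i => i.elim0, fun i => i.elim0,
      Or.inl ⟨fun i => i.elim0, fun i => i.elim0⟩⟩
  · push_neg at hn
    have h01 : (⟨0, by omega⟩ : Fin n) < ⟨1, by omega⟩ := by simp [Fin.lt_def]
    have hk : 2 * k ≤ n := by omega
    rcases hab with ⟨ha, hb⟩ | ⟨ha, hb⟩
    · -- increasing direction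
      have hc : StrictMono c := by
        rcases hbc with ⟨_, hc⟩ | ⟨hb', _⟩
        · exact hc
        · exact absurd (hb h01) (not_lt.mpr (hb' h01).le)
      -- eliminate AltDown patterns
      have h1' : AltUp a b ∨ AltUp b a := by
        rcases h1 with h | h | ⟨hd1, hd2⟩ | ⟨hd1, hd2⟩
        · exact Or.inl h
        · exact Or.inr h
        · exact absurd (ha h01) (not_lt.mpr ((hd2 _ _ rfl).trans (hd1 _)).le)
        · exact absurd (hb h01) (not_lt.mpr ((hd2 _ _ rfl).trans (hd1 _)).le)
      have h2' : AltUp b c ∨ AltUp c b := by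
        rcases h2 with h | h | ⟨hd1, hd2⟩ | ⟨hd1, hd2⟩
        · exact Or.inl h
        · exact Or.inr h
        · exact absurd (hb h01) (not_lt.mpr ((hd2 _ _ rfl).trans (hd1 _)).le)
        · exact absurd (hc h01) (not_lt.mpr ((hd2 _ _ rfl).trans (hd1 _)).le)
      exact ⟨Or.inl ⟨ha, hc⟩, upCase a b c k hk h1' h2'⟩
    · -- decreasing direction
      have hc : StrictAnti c := by
        rcases hbc with ⟨hb', _⟩ | ⟨_, hc⟩
        · exact absurd (hb' h01) (not_lt.mpr (hb h01).le)
        · exact hc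
      have h1' : AltDown a b ∨ AltDown b a := by
        rcases h1 with ⟨hd1, hd2⟩ | ⟨hd1, hd2⟩ | h | h
        · exact absurd (ha h01) (not_lt.mpr ((hd1 _).trans (hd2 _ _ rfl)).le)
        · exact absurd (hb h01) (not_lt.mpr ((hd1 _).trans (hd2 _ _ rfl)).le)
        · exact Or.inl h
        · exact Or.inr h
      have h2' : AltDown b c ∨ AltDown c b := by
        rcases h2 with ⟨hd1, hd2⟩ | ⟨hd1, hd2⟩ | h | h
        · exact absurd (hb h01) (not_lt.mpr ((hd1 _).trans (hd2 _ _ rfl)).le)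
        · exact absurd (hc h01) (not_lt.mpr ((hd1 _).trans (hd2 _ _ rfl)).le)
        · exact Or.inl h
        · exact Or.inr h
      exact ⟨Or.inr ⟨ha, hc⟩, downCase a b c k hk h1' h2'⟩
end

section
/- Let A_0, A_1, ..., A_n be sequences of points in a linear order, each of length k, such that consecutive sequences A_i and A_{i+1} strongly interleave for all i. Then A_0 and A_n are (⌈k/n⌉−1)-interleaving. -/
variable {α : Type*}

section Aux

variable [LinearOrder α]

/-- Monotonicity from adjacent comparisons. -/
lemma strictMono_of_adj {k : ℕ} {a : Fin k → α}
    (h : ∀ i j : Fin k, (i : ℕ) + 1 = (j : ℕ) → a i < a j) : StrictMono a := by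
  have H : ∀ j (hj : j < k) i (hi : i < k), i < j → a ⟨i, hi⟩ < a ⟨j, hj⟩ := by
    intro j
    induction j with
    | zero => omega
    | succ m ih =>
      intro hj i hi hij
      rcases Nat.lt_or_ge i m with h' | h'
      · exact (ih (by omega) i hi h').trans (h ⟨m, by omega⟩ ⟨m + 1, hj⟩ rfl)
      · have : i = m := by omega
        subst this
        exact h ⟨i, hi⟩ ⟨i + 1, hj⟩ rfl
  intro i j hij
  have := H j.val j.isLt i.val i.isLt hij
  simpa using this

lemma AltUp.mono_left {k : ℕ} {a b : Fin k → α} (h : AltUp a b) : StrictMono a :=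
  strictMono_of_adj fun i j hij => (h.1 i).trans (h.2 i j hij)

lemma AltUp.mono_right {k : ℕ} {a b : Fin k → α} (h : AltUp a b) : StrictMono b :=
  strictMono_of_adj fun i j hij => (h.2 i j hij).trans (h.1 j)

/-- The window lemma: in an all-increasing chain, `A n` is sandwiched between
shifts of `A 0`. -/
lemma window {k n : ℕ} (hn : 0 < n) (A : ℕ → Fin k → α)
    (h : ∀ i < n, AltUp (A i) (A (i + 1)) ∨ AltUp (A (i + 1)) (A i)) :
    ∃ p q : ℕ, p + q = n ∧
      (∀ (j : ℕ) (hj : j < k), q ≤ j →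
        A 0 ⟨j - q, lt_of_le_of_lt (Nat.sub_le _ _) hj⟩ < A n ⟨j, hj⟩) ∧
      (∀ (j : ℕ) (hj : j < k) (hjp : j + p < k), A n ⟨j, hj⟩ < A 0 ⟨j + p, hjp⟩) := by
  induction n with
  | zero => omega
  | succ m ih =>
    rcases Nat.eq_zero_or_pos m with rfl | hm
    · rcases h 0 (by norm_num) with h01 | h01
      · refine ⟨1, 0, rfl, ?_, ?_⟩
        · intro j hj _
          exact h01.1 ⟨j, hj⟩
        · intro j hj hjp
          exact h01.2 ⟨j, hj⟩ ⟨j + 1, hjp⟩ rfl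
      · refine ⟨0, 1, rfl, ?_, ?_⟩
        · intro j hj hjq
          exact h01.2 ⟨j - 1, by omega⟩ ⟨j, hj⟩ (show j - 1 + 1 = j by omega)
        · intro j hj hjp
          exact h01.1 ⟨j, hj⟩
    · obtain ⟨p, q, hpq, hlo, hhi⟩ := ih hm fun i hi => h i (by omega)
      rcases h m (by omega) with hup | hup
      · refine ⟨p + 1, q, by omega, ?_, ?_⟩
        · intro j hj hjq
          exact (hlo j hj hjq).trans (hup.1 ⟨j, hj⟩)
        · intro j hj hjp
          have h1 : A (m + 1) ⟨j, hj⟩ < A m ⟨j + 1, by omega⟩ :=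
            hup.2 ⟨j, hj⟩ ⟨j + 1, by omega⟩ rfl
          have h2 : A m ⟨j + 1, by omega⟩ < A 0 ⟨j + 1 + p, by omega⟩ :=
            hhi (j + 1) (by omega) (by omega)
          refine (h1.trans h2).trans_le (le_of_eq ?_)
          congr 1
          exact Fin.ext (show j + 1 + p = j + (p + 1) by omega)
      · refine ⟨p, q + 1, by omega, ?_, ?_⟩
        · intro j hj hjq
          have h1 : A m ⟨j - 1, by omega⟩ < A (m + 1) ⟨j, hj⟩ :=
            hup.2 ⟨j - 1, by omega⟩ ⟨j, hj⟩ (show j - 1 + 1 = j by omega)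
          have h2 : A 0 ⟨j - 1 - q, by omega⟩ < A m ⟨j - 1, by omega⟩ :=
            hlo (j - 1) (by omega) (by omega)
          refine le_of_eq ?_ |>.trans_lt (h2.trans h1)
          congr 1
          exact Fin.ext (show j - (q + 1) = j - 1 - q by omega)
        · intro j hj hjp
          exact (hup.1 ⟨j, hj⟩).trans (hhi j hj hjp)

/-- Main construction in the all-increasing case. -/
lemma main_up {k n : ℕ} (hn : 0 < n) (hk : 1 ≤ k) (A : ℕ → Fin k → α)
    (h : ∀ i < n, AltUp (A i) (A (i + 1)) ∨ AltUp (A (i + 1)) (A i)) :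
    KInterleave ((k + n - 1) / n - 1) (A 0) (A n) := by
  set m := (k + n - 1) / n - 1 with hm
  have hd : ((k + n - 1) / n) * n ≤ k + n - 1 := Nat.div_mul_le_self _ _
  have hsub : ((k + n - 1) / n - 1) * n = ((k + n - 1) / n) * n - 1 * n :=
    Nat.sub_mul _ _ _
  have hmn : m * n ≤ k - 1 := by
    rw [hm, hsub]
    omega
  obtain ⟨p, q, hpq, hlo, hhi⟩ := window hn A h
  have hq : q ≤ n := by omega
  -- index bounds
  have hf : ∀ t : Fin m, (t : ℕ) * n < k := by
    intro t
    have : (t : ℕ) * n ≤ m * n := Nat.mul_le_mul_right n (by omega)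
    omega
  have hg : ∀ t : Fin m, (t : ℕ) * n + q < k := by
    intro t
    have ht : (t : ℕ) + 1 ≤ m := t.isLt
    have : ((t : ℕ) + 1) * n ≤ m * n := Nat.mul_le_mul_right n ht
    have h2 : (t : ℕ) * n + n = ((t : ℕ) + 1) * n := by ring
    omega
  refine ⟨?_, fun t => ⟨(t : ℕ) * n, hf t⟩, fun t => ⟨(t : ℕ) * n + q, hg t⟩, ?_, ?_, ?_⟩
  · -- SameDir
    left
    constructor
    · rcases h 0 hn with h01 | h01
      · exact h01.mono_left
      · exact h01.mono_right
    · rcases h (n - 1) (by omega) with h01 | h01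
      · have : n - 1 + 1 = n := by omega
        rw [this] at h01
        exact h01.mono_right
      · have : n - 1 + 1 = n := by omega
        rw [this] at h01
        exact h01.mono_left
  · intro s t hst
    simp only [Fin.mk_lt_mk]
    exact (Nat.mul_lt_mul_right hn).mpr hst
  · intro s t hst
    simp only [Fin.mk_lt_mk]
    have : (s : ℕ) * n < (t : ℕ) * n := (Nat.mul_lt_mul_right hn).mpr hst
    omega
  · -- StrongInt : choose AltUp
    left
    constructor
    · intro t
      have := hlo ((t : ℕ) * n + q) (hg t) (by omega)
      refine le_of_eq ?_ |>.trans_lt this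
      show A 0 _ = A 0 _
      congr 1
      exact Fin.ext (by simp)
    · intro t s hts
      have hts' : (t : ℕ) + 1 = (s : ℕ) := hts
      have hsn : (s : ℕ) * n = (t : ℕ) * n + n := by
        rw [← hts', Nat.succ_mul]
      have hbound : (t : ℕ) * n + q + p < k := by
        have hs : (s : ℕ) + 1 ≤ m := s.isLt
        have : ((s : ℕ)) * n ≤ m * n := Nat.mul_le_mul_right n (by omega)
        omega
      have := hhi ((t : ℕ) * n + q) (hg t) hbound
      refine this.trans_le (le_of_eq ?_)
      show A 0 _ = A 0 _
      congr 1
      refine Fin.ext ?_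
      show (t : ℕ) * n + q + p = (s : ℕ) * n
      omega

/-- Transfer from the dual order. -/
lemma kinterleave_of_dual {m k₁ k₂ : ℕ} {a : Fin k₁ → α} {b : Fin k₂ → α}
    (h : KInterleave (α := αᵒᵈ) m a b) : KInterleave m a b := by
  obtain ⟨sd, f, g, hf, hg, hsi⟩ := h
  refine ⟨?_, f, g, hf, hg, ?_⟩
  · rcases sd with ⟨h1, h2⟩ | ⟨h1, h2⟩
    · exact Or.inr ⟨h1, h2⟩
    · exact Or.inl ⟨h1, h2⟩
  · rcases hsi with h1 | h1 | h1 | h1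
    · exact Or.inr (Or.inr (Or.inl h1))
    · exact Or.inr (Or.inr (Or.inr h1))
    · exact Or.inl h1
    · exact Or.inr (Or.inl h1)

end Aux

/-- A chain `A 0 ∼ A 1 ∼ ⋯ ∼ A n` of strongly interleaving sequences of length
`k` forces `A 0` and `A n` to `(⌈k/n⌉ - 1)`-interleave. -/
theorem stmt6 [LinearOrder α] {k : ℕ} (n : ℕ) (hn : 0 < n) (A : ℕ → Fin k → α)
    (h : ∀ i < n, StrongInt (A i) (A (i + 1))) :
    KInterleave ((k + n - 1) / n - 1) (A 0) (A n) := by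
  rcases Nat.lt_or_ge k 2 with hk | hk
  · -- k ≤ 1 : everything is vacuous, and the target length is 0
    have hm0 : (k + n - 1) / n - 1 = 0 := by
      interval_cases k
      · rw [show 0 + n - 1 = n - 1 by omega, Nat.div_eq_of_lt (by omega)]
      · rw [show 1 + n - 1 = n by omega, Nat.div_self hn]
    rw [hm0]
    have vac : ∀ (g : Fin k → α), StrictMono g := by
      intro g i j hij
      have h1 := i.isLt
      have h2 := j.isLt
      have h3 : (i : ℕ) < (j : ℕ) := hij
      omega
    exact ⟨Or.inl ⟨vac _, vac _⟩, Fin.elim0, Fin.elim0,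
      fun i => i.elim0, fun i => i.elim0,
      Or.inl ⟨fun i => i.elim0, fun i => i.elim0⟩⟩
  · -- k ≥ 2 : each pair decides a direction, which is consistent along the chain
    set i0 : Fin k := ⟨0, by omega⟩
    set i1 : Fin k := ⟨1, by omega⟩
    have key : ∀ i < n,
        ((A i i0 < A i i1) → (AltUp (A i) (A (i + 1)) ∨ AltUp (A (i + 1)) (A i)) ∧
          A (i + 1) i0 < A (i + 1) i1) ∧
        ((A i i1 < A i i0) → (AltDown (A i) (A (i + 1)) ∨ AltDown (A (i + 1)) (A i)) ∧
          A (i + 1) i1 < A (i + 1) i0) := by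
      intro i hi
      have hi01 : (i0 : ℕ) + 1 = (i1 : ℕ) := rfl
      rcases h i hi with hu | hu | hd | hd
      · have m1 := hu.mono_left (show i0 < i1 from by simp [i0, i1, Fin.mk_lt_mk])
        have m2 := hu.mono_right (show i0 < i1 from by simp [i0, i1, Fin.mk_lt_mk])
        exact ⟨fun _ => ⟨Or.inl hu, m2⟩, fun hlt => absurd m1 (asymm hlt)⟩
      · have m1 := hu.mono_left (show i0 < i1 from by simp [i0, i1, Fin.mk_lt_mk])
        have m2 := hu.mono_right (show i0 < i1 from by simp [i0, i1, Fin.mk_lt_mk])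
        exact ⟨fun _ => ⟨Or.inr hu, m1⟩, fun hlt => absurd m2 (asymm hlt)⟩
      · -- AltDown (A i) (A (i+1)) : both decreasing
        have m1 : A i i1 < A i i0 := (hd.2 i0 i1 hi01).trans (hd.1 i0)
        have m2 : A (i + 1) i1 < A (i + 1) i0 := (hd.1 i1).trans (hd.2 i0 i1 hi01)
        exact ⟨fun hlt => absurd m1 (asymm hlt), fun _ => ⟨Or.inl hd, m2⟩⟩
      · have m1 : A (i + 1) i1 < A (i + 1) i0 := (hd.2 i0 i1 hi01).trans (hd.1 i0)
        have m2 : A i i1 < A i i0 := (hd.1 i1).trans (hd.2 i0 i1 hi01)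
        exact ⟨fun hlt => absurd m2 (asymm hlt), fun _ => ⟨Or.inr hd, m1⟩⟩
    rcases lt_or_gt_of_ne (fun he : A 0 i0 = A 0 i1 => by
      rcases (key 0 hn).1 with _
      rcases h 0 hn with hu | hu | hd | hd
      · exact absurd ((hu.1 i0).trans (hu.2 i0 i1 rfl)) (by simp [he])
      · exact absurd ((hu.2 i0 i1 rfl).trans (hu.1 i1)) (by simp [he])
      · exact absurd ((hd.2 i0 i1 rfl).trans (hd.1 i0)) (by simp [he])
      · exact absurd ((hd.1 i1).trans (hd.2 i0 i1 rfl)) (by simp [he])) with h01 | h01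
    · -- increasing chain
      have up : ∀ i ≤ n, A i i0 < A i i1 ∧
          (i < n → AltUp (A i) (A (i + 1)) ∨ AltUp (A (i + 1)) (A i)) := by
        intro i
        induction i with
        | zero => exact fun _ => ⟨h01, fun hi => ((key 0 hi).1 h01).1⟩
        | succ j ihj =>
          intro hij
          have hj := ihj (by omega)
          have := ((key j (by omega)).1 hj.1).2
          exact ⟨this, fun hi => ((key (j + 1) hi).1 this).1⟩
      exact main_up hn (by omega) A fun i hi => (up i (le_of_lt hi)).2 hi
    · -- decreasing chain: pass to the dual order
      have down : ∀ i ≤ n, A i i1 < A i i0 ∧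
          (i < n → AltDown (A i) (A (i + 1)) ∨ AltDown (A (i + 1)) (A i)) := by
        intro i
        induction i with
        | zero => exact fun _ => ⟨h01, fun hi => ((key 0 hi).2 h01).1⟩
        | succ j ihj =>
          intro hij
          have hj := ihj (by omega)
          have := ((key j (by omega)).2 hj.1).2
          exact ⟨this, fun hi => ((key (j + 1) hi).2 this).1⟩
      refine kinterleave_of_dual ?_
      exact main_up (α := αᵒᵈ) hn (by omega) A fun i hi => (down i (le_of_lt hi)).2 hi
end

section
/- Let A and B k-interleave for some k, and let B and C strongly interleave. Then A and C (⌈k/2⌉−1)-interleave. -/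
variable {α : Type*}

/- ---------- auxiliary lemmas ---------- -/

lemma fin_mono_of_step [LinearOrder α] {m : ℕ} {h : Fin m → α}
    (H : ∀ i j : Fin m, (i : ℕ) + 1 = (j : ℕ) → h i < h j) : StrictMono h := by
  intro p q hpq
  obtain ⟨d, hd⟩ : ∃ d : ℕ, (q : ℕ) = (p : ℕ) + d + 1 :=
    ⟨(q : ℕ) - p - 1, by have := (Fin.lt_def.mp hpq); omega⟩
  clear hpq
  induction d generalizing q with
  | zero => exact H p q (by omega)
  | succ d ih =>
      have hq' : (p : ℕ) + d + 1 < m := by have := q.isLt; omega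
      exact (ih (q := ⟨(p : ℕ) + d + 1, hq'⟩) rfl).trans (H ⟨(p : ℕ) + d + 1, hq'⟩ q (by simp; omega))

lemma altUp_dual [LinearOrder α] {n : ℕ} {a b : Fin n → α} :
    AltUp (OrderDual.toDual ∘ a) (OrderDual.toDual ∘ b) ↔ AltDown a b := Iff.rfl

lemma altDown_dual [LinearOrder α] {n : ℕ} {a b : Fin n → α} :
    AltDown (OrderDual.toDual ∘ a) (OrderDual.toDual ∘ b) ↔ AltUp a b := Iff.rfl

lemma strongInt_dual [LinearOrder α] {n : ℕ} {a b : Fin n → α} :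
    StrongInt (OrderDual.toDual ∘ a) (OrderDual.toDual ∘ b) ↔ StrongInt a b := by
  unfold StrongInt
  rw [altUp_dual, altUp_dual, altDown_dual, altDown_dual]
  tauto

/-- directions forced by a strong interleaving -/
lemma dir_of_strong [LinearOrder α] {m : ℕ} {b c : Fin m → α} (h : StrongInt b c) :
    (StrictMono b ∧ StrictMono c) ∨ (StrictAnti b ∧ StrictAnti c) := by
  rcases h with ⟨V1, V2⟩ | ⟨V1, V2⟩ | ⟨V1, V2⟩ | ⟨V1, V2⟩
  · exact Or.inl ⟨fin_mono_of_step fun i j hij => (V1 i).trans (V2 i j hij),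
      fin_mono_of_step fun i j hij => (V2 i j hij).trans (V1 j)⟩
  · exact Or.inl ⟨fin_mono_of_step fun i j hij => (V2 i j hij).trans (V1 j),
      fin_mono_of_step fun i j hij => (V1 i).trans (V2 i j hij)⟩
  · refine Or.inr ⟨strictMono_toDual_comp_iff.mp ?_, strictMono_toDual_comp_iff.mp ?_⟩
    · exact fin_mono_of_step fun i j hij =>
        (OrderDual.toDual_lt_toDual.mpr ((V2 i j hij).trans (V1 i)))
    · exact fin_mono_of_step fun i j hij =>
        (OrderDual.toDual_lt_toDual.mpr ((V1 j).trans (V2 i j hij)))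
  · refine Or.inr ⟨strictMono_toDual_comp_iff.mp ?_, strictMono_toDual_comp_iff.mp ?_⟩
    · exact fin_mono_of_step fun i j hij =>
        (OrderDual.toDual_lt_toDual.mpr ((V1 j).trans (V2 i j hij)))
    · exact fin_mono_of_step fun i j hij =>
        (OrderDual.toDual_lt_toDual.mpr ((V2 i j hij).trans (V1 i)))

/-- core construction in the all-monotone case -/
lemma core_int [LinearOrder α] {n m k : ℕ} {a : Fin n → α} {b c : Fin m → α}
    {f : Fin k → Fin n} {g : Fin k → Fin m}
    (hk : 3 ≤ k) (hbm : StrictMono b)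
    (hf : StrictMono f) (hg : StrictMono g)
    (hint : StrongInt (a ∘ f) (b ∘ g)) (hbc : StrongInt b c) :
    ∃ F : Fin ((k + 1) / 2 - 1) → Fin n, ∃ G : Fin ((k + 1) / 2 - 1) → Fin m,
      StrictMono F ∧ StrictMono G ∧ StrongInt (a ∘ F) (c ∘ G) := by
  have hm2 : 2 ≤ m := by
    have h01 : (⟨0, by omega⟩ : Fin k) < ⟨1, by omega⟩ := Fin.mk_lt_mk.mpr (by omega)
    have := (g ⟨1, by omega⟩).isLt
    have := Fin.lt_def.mp (hg h01)
    omega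
  -- eliminate the decreasing patterns using monotonicity of b
  have hbcu : AltUp b c ∨ AltUp c b := by
    rcases hbc with h | h | ⟨V1, V2⟩ | ⟨V1, V2⟩
    · exact Or.inl h
    · exact Or.inr h
    · exfalso
      have h1 : b ⟨1, by omega⟩ < c ⟨0, by omega⟩ := V2 ⟨0, by omega⟩ ⟨1, by omega⟩ rfl
      have h2 : c ⟨0, by omega⟩ < b ⟨0, by omega⟩ := V1 _
      exact absurd (hbm (Fin.mk_lt_mk.mpr (by omega : (0:ℕ) < 1))) (not_lt.mpr (h1.trans h2).le)
    · exfalso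
      have h1 : c ⟨1, by omega⟩ < b ⟨0, by omega⟩ := V2 ⟨0, by omega⟩ ⟨1, by omega⟩ rfl
      have h2 : b ⟨1, by omega⟩ < c ⟨1, by omega⟩ := V1 _
      exact absurd (hbm (Fin.mk_lt_mk.mpr (by omega : (0:ℕ) < 1))) (not_lt.mpr (h2.trans h1).le)
  have hintu : AltUp (a ∘ f) (b ∘ g) ∨ AltUp (b ∘ g) (a ∘ f) := by
    rcases hint with h | h | ⟨V1, V2⟩ | ⟨V1, V2⟩
    · exact Or.inl h
    · exact Or.inr h
    · exfalso
      have h1 : a (f ⟨1, by omega⟩) < b (g ⟨0, by omega⟩) :=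
        V2 ⟨0, by omega⟩ ⟨1, by omega⟩ rfl
      have h2 : b (g ⟨1, by omega⟩) < a (f ⟨1, by omega⟩) := V1 _
      have h3 : b (g ⟨0, by omega⟩) < b (g ⟨1, by omega⟩) :=
        hbm (hg (Fin.mk_lt_mk.mpr (by omega : (0:ℕ) < 1)))
      exact absurd (h3.trans h2) (not_lt.mpr h1.le)
    · exfalso
      have h1 : b (g ⟨1, by omega⟩) < a (f ⟨0, by omega⟩) :=
        V2 ⟨0, by omega⟩ ⟨1, by omega⟩ rfl
      have h2 : a (f ⟨0, by omega⟩) < b (g ⟨0, by omega⟩) := V1 _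
      have h3 : b (g ⟨0, by omega⟩) < b (g ⟨1, by omega⟩) :=
        hbm (hg (Fin.mk_lt_mk.mpr (by omega : (0:ℕ) < 1)))
      exact absurd (h3.trans h1) (not_lt.mpr h2.le)
  have hcm : StrictMono c := by
    rcases dir_of_strong hbc with ⟨_, h⟩ | ⟨h, _⟩
    · exact h
    · exfalso
      have h01 : (⟨0, by omega⟩ : Fin m) < (⟨1, by omega⟩ : Fin m) :=
        Fin.mk_lt_mk.mpr (by omega)
      exact absurd (hbm h01) (not_lt.mpr (h h01).le)
  -- index arithmetic
  have idx1 : ∀ i : Fin ((k + 1) / 2 - 1), 2 * (i : ℕ) + 1 < k := fun i => by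
    have := i.isLt; omega
  have idx0 : ∀ i : Fin ((k + 1) / 2 - 1), 2 * (i : ℕ) < k := fun i => by
    have := idx1 i; omega
  have gsucc : ∀ (i j : Fin k), (i : ℕ) < (j : ℕ) →
      ((g i : ℕ) + 1 < m ∧ (g i : ℕ) + 1 ≤ (g j : ℕ)) := by
    intro i j hij
    have h1 := Fin.lt_def.mp (hg (Fin.lt_def.mpr hij))
    have h2 := (g j).isLt
    exact ⟨by omega, by omega⟩
  rcases hintu with ⟨U1, U2⟩ | ⟨U1, U2⟩ <;> rcases hbcu with ⟨V1, V2⟩ | ⟨V1, V2⟩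
  · -- AltUp (a∘f) (b∘g), AltUp b c : even / even, AltUp (a∘F) (c∘G)
    refine ⟨fun i => f ⟨2 * i, idx0 i⟩, fun i => g ⟨2 * i, idx0 i⟩,
      fun i j hij => hf (Fin.mk_lt_mk.mpr (by have := Fin.lt_def.mp hij; omega)),
      fun i j hij => hg (Fin.mk_lt_mk.mpr (by have := Fin.lt_def.mp hij; omega)),
      Or.inl ⟨?_, ?_⟩⟩
    · intro i
      exact (U1 ⟨2 * i, idx0 i⟩).trans (V1 _)
    · intro i j hij
      have hlt : (2 * (i : ℕ)) < 2 * (i : ℕ) + 1 := by omega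
      obtain ⟨hpm, hple⟩ := gsucc ⟨2 * i, idx0 i⟩ ⟨2 * i + 1, idx1 i⟩ hlt
      have s1 : c (g ⟨2 * i, idx0 i⟩) < b ⟨(g ⟨2 * i, idx0 i⟩ : ℕ) + 1, hpm⟩ :=
        V2 _ _ rfl
      have s2 : b ⟨(g ⟨2 * i, idx0 i⟩ : ℕ) + 1, hpm⟩ ≤ b (g ⟨2 * i + 1, idx1 i⟩) :=
        hbm.monotone (Fin.le_def.mpr hple)
      have s3 : b (g ⟨2 * i + 1, idx1 i⟩) < a (f ⟨2 * j, idx0 j⟩) :=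
        U2 ⟨2 * i + 1, idx1 i⟩ ⟨2 * j, idx0 j⟩ (by simp; omega)
      exact ((s1.trans_le s2).trans s3)
  · -- AltUp (a∘f) (b∘g), AltUp c b : even / odd, AltUp (a∘F) (c∘G)
    refine ⟨fun i => f ⟨2 * i, idx0 i⟩, fun i => g ⟨2 * i + 1, idx1 i⟩,
      fun i j hij => hf (Fin.mk_lt_mk.mpr (by have := Fin.lt_def.mp hij; omega)),
      fun i j hij => hg (Fin.mk_lt_mk.mpr (by have := Fin.lt_def.mp hij; omega)),
      Or.inl ⟨?_, ?_⟩⟩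
    · intro i
      have hlt : (2 * (i : ℕ)) < 2 * (i : ℕ) + 1 := by omega
      obtain ⟨hpm, hple⟩ := gsucc ⟨2 * i, idx0 i⟩ ⟨2 * i + 1, idx1 i⟩ hlt
      have s1 : a (f ⟨2 * i, idx0 i⟩) < b (g ⟨2 * i, idx0 i⟩) := U1 _
      have s2 : b (g ⟨2 * i, idx0 i⟩) < c ⟨(g ⟨2 * i, idx0 i⟩ : ℕ) + 1, hpm⟩ :=
        V2 _ _ rfl
      have s3 : c ⟨(g ⟨2 * i, idx0 i⟩ : ℕ) + 1, hpm⟩ ≤ c (g ⟨2 * i + 1, idx1 i⟩) :=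
        hcm.monotone (Fin.le_def.mpr hple)
      exact (s1.trans s2).trans_le s3
    · intro i j hij
      have s1 : c (g ⟨2 * i + 1, idx1 i⟩) < b (g ⟨2 * i + 1, idx1 i⟩) := V1 _
      have s2 : b (g ⟨2 * i + 1, idx1 i⟩) < a (f ⟨2 * j, idx0 j⟩) :=
        U2 ⟨2 * i + 1, idx1 i⟩ ⟨2 * j, idx0 j⟩ (by simp; omega)
      exact s1.trans s2
  · -- AltUp (b∘g) (a∘f), AltUp b c : odd / even, AltUp (c∘G) (a∘F)
    refine ⟨fun i => f ⟨2 * i + 1, idx1 i⟩, fun i => g ⟨2 * i, idx0 i⟩,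
      fun i j hij => hf (Fin.mk_lt_mk.mpr (by have := Fin.lt_def.mp hij; omega)),
      fun i j hij => hg (Fin.mk_lt_mk.mpr (by have := Fin.lt_def.mp hij; omega)),
      Or.inr (Or.inl ⟨?_, ?_⟩)⟩
    · intro i
      have hlt : (2 * (i : ℕ)) < 2 * (i : ℕ) + 1 := by omega
      obtain ⟨hpm, hple⟩ := gsucc ⟨2 * i, idx0 i⟩ ⟨2 * i + 1, idx1 i⟩ hlt
      have s1 : c (g ⟨2 * i, idx0 i⟩) < b ⟨(g ⟨2 * i, idx0 i⟩ : ℕ) + 1, hpm⟩ :=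
        V2 _ _ rfl
      have s2 : b ⟨(g ⟨2 * i, idx0 i⟩ : ℕ) + 1, hpm⟩ ≤ b (g ⟨2 * i + 1, idx1 i⟩) :=
        hbm.monotone (Fin.le_def.mpr hple)
      have s3 : b (g ⟨2 * i + 1, idx1 i⟩) < a (f ⟨2 * i + 1, idx1 i⟩) := U1 _
      exact (s1.trans_le s2).trans s3
    · intro i j hij
      have s1 : a (f ⟨2 * i + 1, idx1 i⟩) < b (g ⟨2 * j, idx0 j⟩) :=
        U2 ⟨2 * i + 1, idx1 i⟩ ⟨2 * j, idx0 j⟩ (by simp; omega)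
      have s2 : b (g ⟨2 * j, idx0 j⟩) < c (g ⟨2 * j, idx0 j⟩) := V1 _
      exact s1.trans s2
  · -- AltUp (b∘g) (a∘f), AltUp c b : even / even, AltUp (c∘G) (a∘F)
    refine ⟨fun i => f ⟨2 * i, idx0 i⟩, fun i => g ⟨2 * i, idx0 i⟩,
      fun i j hij => hf (Fin.mk_lt_mk.mpr (by have := Fin.lt_def.mp hij; omega)),
      fun i j hij => hg (Fin.mk_lt_mk.mpr (by have := Fin.lt_def.mp hij; omega)),
      Or.inr (Or.inl ⟨?_, ?_⟩)⟩
    · intro i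
      exact (V1 (g ⟨2 * i, idx0 i⟩)).trans (U1 ⟨2 * i, idx0 i⟩)
    · intro i j hij
      have h2j : 2 * (j : ℕ) = 2 * (i : ℕ) + 2 := by omega
      have hlt : (2 * (i : ℕ) + 1) < 2 * (j : ℕ) := by omega
      obtain ⟨hpm, hple⟩ := gsucc ⟨2 * i + 1, idx1 i⟩ ⟨2 * j, idx0 j⟩ hlt
      have s1 : a (f ⟨2 * i, idx0 i⟩) < b (g ⟨2 * i + 1, idx1 i⟩) :=
        U2 ⟨2 * i, idx0 i⟩ ⟨2 * i + 1, idx1 i⟩ (by simp)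
      have s2 : b (g ⟨2 * i + 1, idx1 i⟩) < c ⟨(g ⟨2 * i + 1, idx1 i⟩ : ℕ) + 1, hpm⟩ :=
        V2 _ _ rfl
      have s3 : c ⟨(g ⟨2 * i + 1, idx1 i⟩ : ℕ) + 1, hpm⟩ ≤ c (g ⟨2 * j, idx0 j⟩) :=
        hcm.monotone (Fin.le_def.mpr hple)
      exact (s1.trans s2).trans_le s3

lemma trivial_mono [LinearOrder α] {m : ℕ} (hm : m ≤ 1) (c : Fin m → α) : StrictMono c := by
  intro i j hij
  exact absurd (Fin.lt_def.mp hij) (by have := j.isLt; omega)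

lemma trivial_anti [LinearOrder α] {m : ℕ} (hm : m ≤ 1) (c : Fin m → α) : StrictAnti c := by
  intro i j hij
  exact absurd (Fin.lt_def.mp hij) (by have := j.isLt; omega)

/-- If `a` and `b` `k`-interleave and `b,c` strongly interleave, then `a` and `c`
`(⌈k/2⌉ - 1)`-interleave. -/
theorem stmt7 [LinearOrder α] {n m k : ℕ} (a : Fin n → α) (b c : Fin m → α)
    (hab : KInterleave k a b) (hbc : StrongInt b c) :
    KInterleave ((k + 1) / 2 - 1) a c := by
  obtain ⟨hsd, f, g, hf, hg, hint⟩ := hab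
  -- same direction for a and c
  have hsac : SameDir a c := by
    by_cases hm : m ≤ 1
    · rcases hsd with ⟨ha, _⟩ | ⟨ha, _⟩
      · exact Or.inl ⟨ha, trivial_mono hm c⟩
      · exact Or.inr ⟨ha, trivial_anti hm c⟩
    · push_neg at hm
      have h01 : (⟨0, by omega⟩ : Fin m) < ⟨1, by omega⟩ := Fin.mk_lt_mk.mpr (by omega)
      rcases hsd with ⟨ha, hb⟩ | ⟨ha, hb⟩ <;>
        rcases dir_of_strong hbc with ⟨hb', hc'⟩ | ⟨hb', hc'⟩
      · exact Or.inl ⟨ha, hc'⟩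
      · exact absurd (hb h01) (not_lt.mpr (hb' h01).le)
      · exact absurd (hb' h01) (not_lt.mpr (hb h01).le)
      · exact Or.inr ⟨ha, hc'⟩
  by_cases hk : k < 3
  · -- the target length is 0
    have hK : (k + 1) / 2 - 1 = 0 := by omega
    refine ⟨hsac, ?_⟩
    rw [hK]
    exact ⟨Fin.elim0, Fin.elim0, fun i => i.elim0, fun i => i.elim0,
      Or.inl ⟨fun i => i.elim0, fun i j _ => i.elim0⟩⟩
  · push_neg at hk
    refine ⟨hsac, ?_⟩
    rcases hsd with ⟨ha, hb⟩ | ⟨ha, hb⟩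
    · exact core_int hk hb hf hg hint hbc
    · -- dualize
      have hb' : StrictMono (OrderDual.toDual ∘ b) := strictMono_toDual_comp_iff.mpr hb
      have hint' : StrongInt ((OrderDual.toDual ∘ a) ∘ f) ((OrderDual.toDual ∘ b) ∘ g) :=
        strongInt_dual.mpr hint
      have hbc' : StrongInt (OrderDual.toDual ∘ b) (OrderDual.toDual ∘ c) :=
        strongInt_dual.mpr hbc
      obtain ⟨F, G, hF, hG, hS⟩ := core_int (c := OrderDual.toDual ∘ c) hk hb' hf hg hint' hbc'
      exact ⟨F, G, hF, hG, strongInt_dual.mp hS⟩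
end

section
/- Let A=[a_1,...,a_n] and B=[b_1,...,b_n] be sequences of distinct points in a linear order with n≥2 that 2-interleave (in particular there are indices giving a_1<b_1<a_2<b_2 after relabeling). Suppose there exist points a and b and a coloring of edges such that all edges (a_i,a) have color c and all edges (b_j,b) have color c, and no two edges of color c cross. Then a contradiction follows; i.e., two fans of the same color over 2-interleaving sequences force a crossing of equally colored edges. -/
variable {α : Type*}

lemma ecm1 [LinearOrder α] {x y z w : α} (h1 : x < z) (h2 : z < y) (h3 : y < w) :
    EdgeCross x y z w := by
  have hxy : x < y := h1.trans h2
  have hzw : z < w := h2.trans h3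
  left
  rw [min_eq_left hxy.le, min_eq_left hzw.le, max_eq_right hxy.le, max_eq_right hzw.le]
  exact ⟨h1, h2, h3⟩

lemma ec_comm1 [LinearOrder α] {x y z w : α} : EdgeCross x y z w ↔ EdgeCross y x z w := by
  unfold EdgeCross; rw [min_comm x y, max_comm x y]

lemma ec_comm2 [LinearOrder α] {x y z w : α} : EdgeCross x y z w ↔ EdgeCross x y w z := by
  unfold EdgeCross; rw [min_comm z w, max_comm z w]

lemma ec_symm [LinearOrder α] {x y z w : α} : EdgeCross x y z w ↔ EdgeCross z w x y := by
  unfold EdgeCross; exact or_comm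

lemma key [LinearOrder α] {p q r s a b : α}
    (h1 : p < q) (h2 : q < r) (h3 : r < s)
    (hap : a ≠ p) (haq : a ≠ q) (har : a ≠ r) (has : a ≠ s)
    (hbp : b ≠ p) (hbq : b ≠ q) (hbr : b ≠ r) (hbs : b ≠ s)
    (hab : a ≠ b) :
    EdgeCross p a q b ∨ EdgeCross p a s b ∨ EdgeCross r a q b ∨ EdgeCross r a s b := by
  rcases hap.lt_or_gt with ha0|ha0
  · rcases hbp.lt_or_gt with hb0|hb0
    · rcases hab.lt_or_gt with hc|hc
      · exact Or.inl (ec_comm1.mpr (ec_comm2.mpr (ecm1 hc hb0 h1)))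
      · exact Or.inr (Or.inr (Or.inl (ec_symm.mpr (ec_comm1.mpr (ec_comm2.mpr (ecm1 hc (lt_trans ha0 h1) h2))))))
    · rcases hbq.lt_or_gt with hb1|hb1
      · rcases hab.lt_or_gt with hc|hc
        · exact Or.inr (Or.inr (Or.inr (ec_comm1.mpr (ec_comm2.mpr (ecm1 hc (lt_trans hb1 h2) h3)))))
        · exact Or.inr (Or.inr (Or.inr (ec_comm1.mpr (ec_comm2.mpr (ecm1 (lt_trans ha0 hb0) (lt_trans hb1 h2) h3)))))
      · rcases hbr.lt_or_gt with hb2|hb2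
        · rcases hab.lt_or_gt with hc|hc
          · exact Or.inr (Or.inr (Or.inr (ec_comm1.mpr (ec_comm2.mpr (ecm1 hc hb2 h3)))))
          · exact Or.inr (Or.inr (Or.inr (ec_comm1.mpr (ec_comm2.mpr (ecm1 (lt_trans ha0 hb0) hb2 h3)))))
        · rcases hbs.lt_or_gt with hb3|hb3
          · rcases hab.lt_or_gt with hc|hc
            · exact Or.inr (Or.inr (Or.inl (ec_comm1.mpr (ecm1 (lt_trans ha0 h1) h2 hb2))))
            · exact Or.inr (Or.inr (Or.inl (ec_comm1.mpr (ecm1 (lt_trans ha0 h1) h2 hb2))))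
          · rcases hab.lt_or_gt with hc|hc
            · exact Or.inr (Or.inr (Or.inl (ec_comm1.mpr (ecm1 (lt_trans ha0 h1) h2 hb2))))
            · exact Or.inr (Or.inr (Or.inl (ec_comm1.mpr (ecm1 (lt_trans ha0 h1) h2 hb2))))
  · rcases haq.lt_or_gt with ha1|ha1
    · rcases hbp.lt_or_gt with hb0|hb0
      · rcases hab.lt_or_gt with hc|hc
        · exact Or.inr (Or.inr (Or.inl (ec_symm.mpr (ec_comm1.mpr (ec_comm2.mpr (ecm1 (lt_trans hb0 ha0) ha1 h2))))))
        · exact Or.inr (Or.inr (Or.inl (ec_symm.mpr (ec_comm1.mpr (ec_comm2.mpr (ecm1 hc ha1 h2))))))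
      · rcases hbq.lt_or_gt with hb1|hb1
        · rcases hab.lt_or_gt with hc|hc
          · exact Or.inr (Or.inr (Or.inr (ec_comm1.mpr (ec_comm2.mpr (ecm1 hc (lt_trans hb1 h2) h3)))))
          · exact Or.inl (ec_comm2.mpr (ecm1 hb0 hc ha1))
        · rcases hbr.lt_or_gt with hb2|hb2
          · rcases hab.lt_or_gt with hc|hc
            · exact Or.inr (Or.inr (Or.inr (ec_comm1.mpr (ec_comm2.mpr (ecm1 hc hb2 h3)))))
            · exact Or.inr (Or.inr (Or.inr (ec_comm1.mpr (ec_comm2.mpr (ecm1 (lt_trans ha1 hb1) hb2 h3)))))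
          · rcases hbs.lt_or_gt with hb3|hb3
            · rcases hab.lt_or_gt with hc|hc
              · exact Or.inr (Or.inr (Or.inl (ec_comm1.mpr (ecm1 ha1 h2 hb2))))
              · exact Or.inr (Or.inr (Or.inl (ec_comm1.mpr (ecm1 ha1 h2 hb2))))
            · rcases hab.lt_or_gt with hc|hc
              · exact Or.inr (Or.inr (Or.inl (ec_comm1.mpr (ecm1 ha1 h2 hb2))))
              · exact Or.inr (Or.inr (Or.inl (ec_comm1.mpr (ecm1 ha1 h2 hb2))))
    · rcases har.lt_or_gt with ha2|ha2
      · rcases hbp.lt_or_gt with hb0|hb0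
        · rcases hab.lt_or_gt with hc|hc
          · exact Or.inl (ec_symm.mpr (ec_comm1.mpr (ecm1 hb0 h1 ha1)))
          · exact Or.inl (ec_symm.mpr (ec_comm1.mpr (ecm1 hb0 h1 ha1)))
        · rcases hbq.lt_or_gt with hb1|hb1
          · rcases hab.lt_or_gt with hc|hc
            · exact Or.inr (Or.inl (ec_comm2.mpr (ecm1 hb0 (lt_trans hb1 ha1) (lt_trans ha2 h3))))
            · exact Or.inr (Or.inl (ec_comm2.mpr (ecm1 hb0 hc (lt_trans ha2 h3))))
          · rcases hbr.lt_or_gt with hb2|hb2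
            · rcases hab.lt_or_gt with hc|hc
              · exact Or.inl (ecm1 h1 ha1 hc)
              · exact Or.inr (Or.inl (ec_comm2.mpr (ecm1 hb0 hc (lt_trans ha2 h3))))
            · rcases hbs.lt_or_gt with hb3|hb3
              · rcases hab.lt_or_gt with hc|hc
                · exact Or.inl (ecm1 h1 ha1 hc)
                · exact Or.inl (ecm1 h1 ha1 (lt_trans ha2 hb2))
              · rcases hab.lt_or_gt with hc|hc
                · exact Or.inl (ecm1 h1 ha1 hc)
                · exact Or.inl (ecm1 h1 ha1 (lt_trans ha2 hb2))
      · rcases has.lt_or_gt with ha3|ha3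
        · rcases hbp.lt_or_gt with hb0|hb0
          · rcases hab.lt_or_gt with hc|hc
            · exact Or.inl (ec_symm.mpr (ec_comm1.mpr (ecm1 hb0 h1 ha1)))
            · exact Or.inl (ec_symm.mpr (ec_comm1.mpr (ecm1 hb0 h1 ha1)))
          · rcases hbq.lt_or_gt with hb1|hb1
            · rcases hab.lt_or_gt with hc|hc
              · exact Or.inr (Or.inl (ec_comm2.mpr (ecm1 hb0 (lt_trans hb1 ha1) ha3)))
              · exact Or.inr (Or.inl (ec_comm2.mpr (ecm1 hb0 hc ha3)))
            · rcases hbr.lt_or_gt with hb2|hb2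
              · rcases hab.lt_or_gt with hc|hc
                · exact Or.inr (Or.inl (ec_comm2.mpr (ecm1 hb0 (lt_trans hb2 ha2) ha3)))
                · exact Or.inr (Or.inl (ec_comm2.mpr (ecm1 hb0 hc ha3)))
              · rcases hbs.lt_or_gt with hb3|hb3
                · rcases hab.lt_or_gt with hc|hc
                  · exact Or.inl (ecm1 h1 ha1 hc)
                  · exact Or.inr (Or.inl (ec_comm2.mpr (ecm1 hb0 hc ha3)))
                · rcases hab.lt_or_gt with hc|hc
                  · exact Or.inl (ecm1 h1 ha1 hc)
                  · exact Or.inl (ecm1 h1 ha1 (lt_trans ha3 hb3))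
        · rcases hbp.lt_or_gt with hb0|hb0
          · rcases hab.lt_or_gt with hc|hc
            · exact Or.inl (ec_symm.mpr (ec_comm1.mpr (ecm1 hb0 h1 ha1)))
            · exact Or.inl (ec_symm.mpr (ec_comm1.mpr (ecm1 hb0 h1 ha1)))
          · rcases hbq.lt_or_gt with hb1|hb1
            · rcases hab.lt_or_gt with hc|hc
              · exact Or.inr (Or.inr (Or.inr (ec_symm.mpr (ec_comm1.mpr (ecm1 (lt_trans hb1 h2) h3 ha3)))))
              · exact Or.inr (Or.inr (Or.inr (ec_symm.mpr (ec_comm1.mpr (ecm1 (lt_trans hb1 h2) h3 ha3)))))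
            · rcases hbr.lt_or_gt with hb2|hb2
              · rcases hab.lt_or_gt with hc|hc
                · exact Or.inr (Or.inr (Or.inr (ec_symm.mpr (ec_comm1.mpr (ecm1 hb2 h3 ha3)))))
                · exact Or.inr (Or.inr (Or.inr (ec_symm.mpr (ec_comm1.mpr (ecm1 hb2 h3 ha3)))))
              · rcases hbs.lt_or_gt with hb3|hb3
                · rcases hab.lt_or_gt with hc|hc
                  · exact Or.inr (Or.inr (Or.inl (ec_symm.mpr (ecm1 h2 hb2 (lt_trans hb3 ha3)))))
                  · exact Or.inr (Or.inr (Or.inl (ec_symm.mpr (ecm1 h2 hb2 hc))))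
                · rcases hab.lt_or_gt with hc|hc
                  · exact Or.inl (ecm1 h1 ha1 hc)
                  · exact Or.inr (Or.inr (Or.inl (ec_symm.mpr (ecm1 h2 hb2 hc))))


/-- Two fans of the same colour over 2-interleaving sequences force a crossing of
equally coloured edges: the configuration is contradictory. -/
theorem stmt8 [LinearOrder α] {n : ℕ} (hn : 2 ≤ n) (A B : Fin n → α) (a b : α)
    (hint : KInterleave 2 A B)
    (hda : ∀ i, A i ≠ a ∧ A i ≠ b) (hdb : ∀ j, B j ≠ a ∧ B j ≠ b)
    (hab : a ≠ b) (hAB : ∀ i j, A i ≠ B j)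
    (hnc : ∀ i j, ¬ EdgeCross (A i) a (B j) b) : False := by
  obtain ⟨-, f, g, -, -, hsi⟩ := hint
  have h01 : ((0 : Fin 2) : ℕ) + 1 = ((1 : Fin 2) : ℕ) := by decide
  rcases hsi with ⟨hu, hs⟩ | ⟨hu, hs⟩ | ⟨hu, hs⟩ | ⟨hu, hs⟩
  · -- AltUp (A∘f) (B∘g) : A f0 < B g0 < A f1 < B g1
    have k := key (hu 0) (hs 0 1 h01) (hu 1)
      (hda (f 0)).1.symm (hdb (g 0)).1.symm (hda (f 1)).1.symm (hdb (g 1)).1.symm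
      (hda (f 0)).2.symm (hdb (g 0)).2.symm (hda (f 1)).2.symm (hdb (g 1)).2.symm
      hab
    rcases k with h | h | h | h
    exacts [hnc (f 0) (g 0) h, hnc (f 0) (g 1) h, hnc (f 1) (g 0) h, hnc (f 1) (g 1) h]
  · -- AltUp (B∘g) (A∘f) : B g0 < A f0 < B g1 < A f1
    have k := key (hu 0) (hs 0 1 h01) (hu 1)
      (hdb (g 0)).2.symm (hda (f 0)).2.symm (hdb (g 1)).2.symm (hda (f 1)).2.symm
      (hdb (g 0)).1.symm (hda (f 0)).1.symm (hdb (g 1)).1.symm (hda (f 1)).1.symm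
      hab.symm
    rcases k with h | h | h | h
    exacts [hnc (f 0) (g 0) (ec_symm.mp h), hnc (f 1) (g 0) (ec_symm.mp h),
      hnc (f 0) (g 1) (ec_symm.mp h), hnc (f 1) (g 1) (ec_symm.mp h)]
  · -- AltDown (A∘f) (B∘g) : B g1 < A f1 < B g0 < A f0
    have k := key (hu 1) (hs 0 1 h01) (hu 0)
      (hdb (g 1)).2.symm (hda (f 1)).2.symm (hdb (g 0)).2.symm (hda (f 0)).2.symm
      (hdb (g 1)).1.symm (hda (f 1)).1.symm (hdb (g 0)).1.symm (hda (f 0)).1.symm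
      hab.symm
    rcases k with h | h | h | h
    exacts [hnc (f 1) (g 1) (ec_symm.mp h), hnc (f 0) (g 1) (ec_symm.mp h),
      hnc (f 1) (g 0) (ec_symm.mp h), hnc (f 0) (g 0) (ec_symm.mp h)]
  · -- AltDown (B∘g) (A∘f) : A f1 < B g1 < A f0 < B g0
    have k := key (hu 1) (hs 0 1 h01) (hu 0)
      (hda (f 1)).1.symm (hdb (g 1)).1.symm (hda (f 0)).1.symm (hdb (g 0)).1.symm
      (hda (f 1)).2.symm (hdb (g 1)).2.symm (hda (f 0)).2.symm (hdb (g 0)).2.symm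
      hab
    rcases k with h | h | h | h
    exacts [hnc (f 1) (g 1) h, hnc (f 1) (g 0) h, hnc (f 0) (g 1) h, hnc (f 0) (g 0) h]
end

section
/- Let A, B, C be sequences of points in a linear order, with A and B forming a rainbow whose connecting edges (a_i,b_i) all have color c, and C fanned at a vertex v with all edges (c_j,v) of color c, and suppose A and C k-interleave with k≥3. Then some color-c edge from the rainbow crosses some color-c edge from the fan; i.e., the configuration is impossible in a stack layout where equally colored edges do not cross. -/
variable {α : Type*}

lemma cross3 [LinearOrder α] {p q r s v : α} (h1 : p < q) (h2 : q < r) (h3 : r < s)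
    (hq : v ≠ q) (hs : v ≠ s) : EdgeCross q s p v ∨ EdgeCross q s r v := by
  have hqs : q ≤ s := (h2.trans h3).le
  rcases lt_trichotomy v q with hv|hv|hv
  · right; right
    have hvr : v ≤ r := (hv.trans h2).le
    rw [min_eq_right hvr, max_eq_left hvr, min_eq_left hqs, max_eq_right hqs]
    exact ⟨hv, h2, h3⟩
  · exact absurd hv hq
  · rcases lt_trichotomy v s with hv2|hv2|hv2
    · left; right
      have hpv : p ≤ v := (h1.trans hv).le
      rw [min_eq_left hpv, max_eq_right hpv, min_eq_left hqs, max_eq_right hqs]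
      exact ⟨h1, hv, hv2⟩
    · exact absurd hv2 hs
    · right; left
      have hrv : r ≤ v := (h3.trans hv2).le
      rw [min_eq_left hqs, max_eq_right hqs, min_eq_left hrv, max_eq_right hrv]
      exact ⟨h2, h3, hv2⟩

lemma cross3' [LinearOrder α] {p q r s v : α} (h1 : s < r) (h2 : r < q) (h3 : q < p)
    (hq : v ≠ q) (hs : v ≠ s) : EdgeCross q s p v ∨ EdgeCross q s r v := by
  have hsq : s ≤ q := (h1.trans h2).le
  rcases lt_trichotomy v q with hv|hv|hv
  · rcases lt_trichotomy v s with hv2|hv2|hv2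
    · right; right
      have hvr : v ≤ r := (hv2.trans h1).le
      rw [min_eq_right hvr, max_eq_left hvr, min_eq_right hsq, max_eq_left hsq]
      exact ⟨hv2, h1, h2⟩
    · exact absurd hv2 hs
    · left; left
      have hvp : v ≤ p := (hv.trans h3).le
      rw [min_eq_right hsq, max_eq_left hsq, min_eq_right hvp, max_eq_left hvp]
      exact ⟨hv2, hv, h3⟩
  · exact absurd hv hq
  · right; left
    have hrv : r ≤ v := (h2.trans hv).le
    rw [min_eq_right hsq, max_eq_left hsq, min_eq_left hrv, max_eq_right hrv]
    exact ⟨h1, h2, hv⟩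

lemma keyCross [LinearOrder α] {q s cl ch alo ahi v : α}
    (h1 : alo < cl) (h2 : cl < q) (h3 : q < ch) (h4 : ch < ahi)
    (hsep : ahi < s ∨ s < alo) (hq : v ≠ q) (hs : v ≠ s) :
    EdgeCross q s cl v ∨ EdgeCross q s ch v := by
  rcases hsep with h|h
  · exact cross3 h2 h3 (h4.trans h) hq hs
  · exact (cross3' (h.trans h1) h2 h3 hq hs).symm

/-- A rainbow `(A,B)` of colour `c` and a fan `C` (to apex `v`) of the same
colour, with `A` and `C` `k`-interleaving for `k ≥ 3`, force a crossing of two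
colour-`c` edges: the configuration is contradictory. -/
theorem stmt9 [LinearOrder α] {n m k : ℕ} (hk : 3 ≤ k)
    (A B : Fin n → α) (C : Fin m → α) (v : α)
    (hr : RainbowPat A B) (hint : KInterleave k A C)
    (hv : ∀ i, v ≠ A i ∧ v ≠ B i)
    (hC : ∀ (j : Fin m) (i : Fin n), C j ≠ A i ∧ C j ≠ B i ∧ C j ≠ v)
    (hnc : ∀ (i : Fin n) (j : Fin m), ¬ EdgeCross (A i) (B i) (C j) v) : False := by
  obtain ⟨-, f, g, hf, hg, hsi⟩ := hint
  obtain ⟨-, hsep⟩ := hr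
  have h0 : 0 < k := by omega
  have h1 : 1 < k := by omega
  have h2 : 2 < k := by omega
  set t0 : Fin k := ⟨0, h0⟩
  set t1 : Fin k := ⟨1, h1⟩
  set t2 : Fin k := ⟨2, h2⟩
  have hvq : v ≠ A (f t1) := (hv (f t1)).1
  have hvs : v ≠ B (f t1) := (hv (f t1)).2
  rcases hsi with h|h|h|h
  · -- AltUp (A∘f) (C∘g): a0 < c0 < a1 < c1 < a2
    have e1 : A (f t0) < C (g t0) := h.1 t0
    have e2 : C (g t0) < A (f t1) := h.2 t0 t1 rfl
    have e3 : A (f t1) < C (g t1) := h.1 t1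
    have e4 : C (g t1) < A (f t2) := h.2 t1 t2 rfl
    have hsep' : A (f t2) < B (f t1) ∨ B (f t1) < A (f t0) :=
      hsep.imp (fun h => h _ _) (fun h => h _ _)
    rcases keyCross e1 e2 e3 e4 hsep' hvq hvs with hcr|hcr
    · exact hnc (f t1) (g t0) hcr
    · exact hnc (f t1) (g t1) hcr
  · -- AltUp (C∘g) (A∘f): c0 < a0 < c1 < a1 < c2 < a2
    have e1 : A (f t0) < C (g t1) := h.2 t0 t1 rfl
    have e2 : C (g t1) < A (f t1) := h.1 t1
    have e3 : A (f t1) < C (g t2) := h.2 t1 t2 rfl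
    have e4 : C (g t2) < A (f t2) := h.1 t2
    have hsep' : A (f t2) < B (f t1) ∨ B (f t1) < A (f t0) :=
      hsep.imp (fun h => h _ _) (fun h => h _ _)
    rcases keyCross e1 e2 e3 e4 hsep' hvq hvs with hcr|hcr
    · exact hnc (f t1) (g t1) hcr
    · exact hnc (f t1) (g t2) hcr
  · -- AltDown (A∘f) (C∘g): a2 < c1 < a1 < c0 < a0
    have e1 : A (f t2) < C (g t1) := h.2 t1 t2 rfl
    have e2 : C (g t1) < A (f t1) := h.1 t1
    have e3 : A (f t1) < C (g t0) := h.2 t0 t1 rfl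
    have e4 : C (g t0) < A (f t0) := h.1 t0
    have hsep' : A (f t0) < B (f t1) ∨ B (f t1) < A (f t2) :=
      hsep.imp (fun h => h _ _) (fun h => h _ _)
    rcases keyCross e1 e2 e3 e4 hsep' hvq hvs with hcr|hcr
    · exact hnc (f t1) (g t1) hcr
    · exact hnc (f t1) (g t0) hcr
  · -- AltDown (C∘g) (A∘f): a2 < c2 < a1 < c1 < a0
    have e1 : A (f t2) < C (g t2) := h.1 t2
    have e2 : C (g t2) < A (f t1) := h.2 t1 t2 rfl
    have e3 : A (f t1) < C (g t1) := h.1 t1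
    have e4 : C (g t1) < A (f t0) := h.2 t0 t1 rfl
    have hsep' : A (f t0) < B (f t1) ∨ B (f t1) < A (f t2) :=
      hsep.imp (fun h => h _ _) (fun h => h _ _)
    rcases keyCross e1 e2 e3 e4 hsep' hvq hvs with hcr|hcr
    · exact hnc (f t1) (g t2) hcr
    · exact hnc (f t1) (g t1) hcr
end

section
/- Let A and B be monotone sequences of the same direction in a linear order that k-interleave. Suppose C and D are monotone sequences such that (A,C) is a rainbow with all connecting edges of color c, (B,D) is a rainbow with all connecting edges of the same color c, and no two color-c edges cross. Then C and D (k−2)-interleave. -/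
variable {α : Type*}

section Helpers

variable [LinearOrder α]

lemma edgeCross_iff {x y z w : α} (hxy : x < y) (hzw : z < w) :
    EdgeCross x y z w ↔ (x < z ∧ z < y ∧ y < w) ∨ (z < x ∧ x < w ∧ w < y) := by
  rw [EdgeCross, min_eq_left hxy.le, max_eq_right hxy.le, min_eq_left hzw.le,
    max_eq_right hzw.le]

lemma edgeCross_comm {x y z w : α} : EdgeCross x y z w ↔ EdgeCross z w x y :=
  or_comm

lemma edgeCross_swap_left {x y z w : α} : EdgeCross x y z w ↔ EdgeCross y x z w := by
  rw [EdgeCross, EdgeCross, min_comm y x, max_comm y x]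

lemma edgeCross_swap_right {x y z w : α} : EdgeCross x y z w ↔ EdgeCross x y w z := by
  rw [EdgeCross, EdgeCross, min_comm w z, max_comm w z]

lemma edgeCross_toDual {x y z w : α} :
    EdgeCross (OrderDual.toDual x) (OrderDual.toDual y) (OrderDual.toDual z)
      (OrderDual.toDual w) ↔ EdgeCross x y z w := by
  simp only [EdgeCross, ← toDual_max, ← toDual_min,
    OrderDual.toDual_lt_toDual]
  tauto

lemma strictBoth {n : ℕ} (hn : n ≤ 1) (f : Fin n → α) : StrictMono f ∧ StrictAnti f := by
  constructor <;> intro i j hij <;>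
    exact absurd (Fin.lt_def.mp hij) (by have h1 := i.isLt; have h2 := j.isLt; omega)

lemma sameDirCD {n m : ℕ} (A C : Fin n → α) (B D : Fin m → α)
    (hsd : SameDir A B) (hAC : RainbowPat A C) (hBD : RainbowPat B D) :
    SameDir C D := by
  by_cases h2n : 2 ≤ n
  · by_cases h2m : 2 ≤ m
    · have hnb : ∀ f : Fin n → α, StrictMono f → StrictAnti f → False := by
        intro f hm ha
        have h01 : (⟨0, by omega⟩ : Fin n) < ⟨1, by omega⟩ := Fin.mk_lt_mk.mpr one_pos
        exact lt_asymm (hm h01) (ha h01)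
      have hmb : ∀ f : Fin m → α, StrictMono f → StrictAnti f → False := by
        intro f hm ha
        have h01 : (⟨0, by omega⟩ : Fin m) < ⟨1, by omega⟩ := Fin.mk_lt_mk.mpr one_pos
        exact lt_asymm (hm h01) (ha h01)
      rcases hsd with ⟨hAm, hBm⟩ | ⟨hAa, hBa⟩
      · rcases hAC.1 with ⟨_, hCa⟩ | ⟨hAa, _⟩
        · rcases hBD.1 with ⟨_, hDa⟩ | ⟨hBa, _⟩
          · exact Or.inr ⟨hCa, hDa⟩
          · exact absurd (hmb B hBm hBa) not_false
        · exact absurd (hnb A hAm hAa) not_false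
      · rcases hAC.1 with ⟨hAm, _⟩ | ⟨_, hCm⟩
        · exact absurd (hnb A hAm hAa) not_false
        · rcases hBD.1 with ⟨hBm, _⟩ | ⟨_, hDm⟩
          · exact absurd (hmb B hBm hBa) not_false
          · exact Or.inl ⟨hCm, hDm⟩
    · have hD := strictBoth (show m ≤ 1 by omega) D
      rcases hAC.1 with ⟨_, hCa⟩ | ⟨_, hCm⟩
      · exact Or.inr ⟨hCa, hD.2⟩
      · exact Or.inl ⟨hCm, hD.1⟩
  · have hC := strictBoth (show n ≤ 1 by omega) C
    rcases hBD.1 with ⟨_, hDa⟩ | ⟨_, hDm⟩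
    · exact Or.inr ⟨hC.2, hDa⟩
    · exact Or.inl ⟨hC.1, hDm⟩

lemma coreUp {k : ℕ} (hk : 3 ≤ k) (a b c d : Fin k → α)
    (h1 : ∀ i, a i < b i)
    (h2 : ∀ i j : Fin k, (i : ℕ) + 1 = (j : ℕ) → b i < a j)
    (hsac : (∀ i j, a i < c j) ∨ (∀ i j, c i < a j))
    (hsbd : (∀ i, b i < d i) ∨ (∀ i, d i < b i))
    (hdanti : ∀ i j : Fin k, i < j → d j < d i)
    (hne : ∀ i j : Fin k, a i ≠ b j ∧ a i ≠ d j ∧ c i ≠ b j ∧ c i ≠ d j)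
    (hnc : ∀ i j : Fin k, ¬ EdgeCross (a i) (c i) (b j) (d j)) :
    (∀ i : Fin k, 1 ≤ (i : ℕ) → (i : ℕ) + 1 < k → d i < c i) ∧
      (∀ i j : Fin k, (i : ℕ) + 1 = (j : ℕ) → c j < d i) := by
  rcases hsac with hac | hca <;> rcases hsbd with hbd | hdb
  · -- a below c, b below d
    constructor
    · intro i _ hik
      have hbc : b i < c i := (h2 i ⟨(i : ℕ) + 1, hik⟩ rfl).trans (hac _ i)
      have hcr := hnc i i
      rw [edgeCross_iff (hac i i) (hbd i)] at hcr
      rcases ((hne i i).2.2.2).lt_or_gt with h | h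
      · exact absurd (Or.inl ⟨h1 i, hbc, h⟩) hcr
      · exact h
    · intro i j hij
      have hijf : i < j := Fin.lt_def.mpr (by omega)
      have had : a j < d i := ((h1 j).trans (hbd j)).trans (hdanti i j hijf)
      have hcr := hnc j i
      rw [edgeCross_iff (hac j j) (hbd i)] at hcr
      rcases ((hne j i).2.2.2).lt_or_gt with h | h
      · exact h
      · exact absurd (Or.inr ⟨h2 i j hij, had, h⟩) hcr
  · -- a below c, d below b : impossible
    exfalso
    have i0 : Fin k := ⟨0, by omega⟩
    have key : a ⟨1, by omega⟩ < d ⟨1, by omega⟩ := by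
      set i1 : Fin k := ⟨1, by omega⟩ with hi1
      have hbc : b i1 < c i1 := (h2 i1 ⟨2, by omega⟩ rfl).trans (hac _ i1)
      have hcr := hnc i1 i1
      rw [edgeCross_swap_right, edgeCross_iff (hac i1 i1) (hdb i1)] at hcr
      rcases ((hne i1 i1).2.1).lt_or_gt with h | h
      · exact h
      · exact absurd (Or.inr ⟨h, h1 i1, hbc⟩) hcr
    have hchain : d ⟨1, by omega⟩ < a ⟨1, by omega⟩ :=
      ((hdanti ⟨0, by omega⟩ ⟨1, by omega⟩ (Fin.mk_lt_mk.mpr one_pos)).trans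
        (hdb ⟨0, by omega⟩)).trans (h2 ⟨0, by omega⟩ ⟨1, by omega⟩ rfl)
    exact lt_asymm key hchain
  · -- c below a, b below d : impossible
    exfalso
    have hcb : c ⟨1, by omega⟩ < b ⟨0, by omega⟩ :=
      (hca _ ⟨0, by omega⟩).trans (h1 ⟨0, by omega⟩)
    have hcr := hnc ⟨1, by omega⟩ ⟨0, by omega⟩
    rw [edgeCross_swap_left,
      edgeCross_iff (hca ⟨1, by omega⟩ ⟨1, by omega⟩) (hbd ⟨0, by omega⟩)] at hcr
    have hda : d ⟨0, by omega⟩ < a ⟨1, by omega⟩ := by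
      rcases ((hne ⟨1, by omega⟩ ⟨0, by omega⟩).2.1).lt_or_gt with h | h
      · exact absurd (Or.inl ⟨hcb, h2 ⟨0, by omega⟩ ⟨1, by omega⟩ rfl, h⟩) hcr
      · exact h
    exact lt_asymm (hdanti ⟨0, by omega⟩ ⟨1, by omega⟩ (Fin.mk_lt_mk.mpr one_pos))
      ((hda.trans (h1 ⟨1, by omega⟩)).trans (hbd ⟨1, by omega⟩))
  · -- c below a, d below b
    constructor
    · intro i h1i hik
      have hpi : (⟨(i : ℕ) - 1, by omega⟩ : Fin k) < i := Fin.lt_def.mpr (by simp; omega)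
      have hda : d i < a i :=
        ((hdanti ⟨(i : ℕ) - 1, by omega⟩ i hpi).trans (hdb _)).trans
          (h2 ⟨(i : ℕ) - 1, by omega⟩ i (by simp; omega))
      have hcr := hnc i i
      rw [edgeCross_swap_left, edgeCross_swap_right,
        edgeCross_iff (hca i i) (hdb i)] at hcr
      rcases ((hne i i).2.2.2).lt_or_gt with h | h
      · exact absurd (Or.inl ⟨h, hda, h1 i⟩) hcr
      · exact h
    · intro i j hij
      have hcb : c j < b i := (hca j i).trans (h1 i)
      have hcr := hnc j i
      rw [edgeCross_swap_left, edgeCross_swap_right,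
        edgeCross_iff (hca j j) (hdb i)] at hcr
      rcases ((hne j i).2.2.2).lt_or_gt with h | h
      · exact h
      · exact absurd (Or.inr ⟨h, hcb, h2 i j hij⟩) hcr

lemma coreDown {k : ℕ} (hk : 3 ≤ k) (a b c d : Fin k → α)
    (h1 : ∀ i, b i < a i)
    (h2 : ∀ i j : Fin k, (i : ℕ) + 1 = (j : ℕ) → a j < b i)
    (hsac : (∀ i j, c j < a i) ∨ (∀ i j, a j < c i))
    (hsbd : (∀ i, d i < b i) ∨ (∀ i, b i < d i))
    (hdmono : ∀ i j : Fin k, i < j → d i < d j)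
    (hne : ∀ i j : Fin k, a i ≠ b j ∧ a i ≠ d j ∧ c i ≠ b j ∧ c i ≠ d j)
    (hnc : ∀ i j : Fin k, ¬ EdgeCross (a i) (c i) (b j) (d j)) :
    (∀ i : Fin k, 1 ≤ (i : ℕ) → (i : ℕ) + 1 < k → c i < d i) ∧
      (∀ i j : Fin k, (i : ℕ) + 1 = (j : ℕ) → d i < c j) := by
  have := coreUp (α := αᵒᵈ) hk
    (fun i => OrderDual.toDual (a i)) (fun i => OrderDual.toDual (b i))
    (fun i => OrderDual.toDual (c i)) (fun i => OrderDual.toDual (d i))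
    (fun i => OrderDual.toDual_lt_toDual.mpr (h1 i))
    (fun i j hij => OrderDual.toDual_lt_toDual.mpr (h2 i j hij))
    (by
      rcases hsac with h | h
      · exact Or.inl fun i j => OrderDual.toDual_lt_toDual.mpr (h i j)
      · exact Or.inr fun i j => OrderDual.toDual_lt_toDual.mpr (h i j))
    (by
      rcases hsbd with h | h
      · exact Or.inl fun i => OrderDual.toDual_lt_toDual.mpr (h i)
      · exact Or.inr fun i => OrderDual.toDual_lt_toDual.mpr (h i))
    (fun i j hij => OrderDual.toDual_lt_toDual.mpr (hdmono i j hij))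
    (fun i j => by
      obtain ⟨e1, e2, e3, e4⟩ := hne i j
      exact ⟨fun h => e1 (OrderDual.toDual_inj.mp h),
        fun h => e2 (OrderDual.toDual_inj.mp h),
        fun h => e3 (OrderDual.toDual_inj.mp h),
        fun h => e4 (OrderDual.toDual_inj.mp h)⟩)
    (fun i j h => hnc i j (edgeCross_toDual.mp h))
  obtain ⟨H1, H2⟩ := this
  exact ⟨fun i a1 a2 => OrderDual.toDual_lt_toDual.mp (H1 i a1 a2),
    fun i j hij => OrderDual.toDual_lt_toDual.mp (H2 i j hij)⟩

end Helpers

def shift2 (k : ℕ) (i : Fin (k - 2)) : Fin k :=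
  ⟨(i : ℕ) + 1, by have := i.isLt; omega⟩

lemma shift2_val {k : ℕ} (i : Fin (k - 2)) : ((shift2 k i : Fin k) : ℕ) = (i : ℕ) + 1 :=
  rfl

lemma shift2_mono {k : ℕ} : StrictMono (shift2 k) :=
  fun i j hij => Fin.mk_lt_mk.mpr (by have := Fin.lt_def.mp hij; omega)

/-- Rainbows preserve interleaves: if `A,B` `k`-interleave, `(A,C)` and `(B,D)`
are rainbows of the same colour, and no two edges of that colour cross, then
`C` and `D` `(k-2)`-interleave. -/
theorem stmt10 [LinearOrder α] {n m : ℕ} (k : ℕ)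
    (A C : Fin n → α) (B D : Fin m → α)
    (hint : KInterleave k A B)
    (hAC : RainbowPat A C) (hBD : RainbowPat B D)
    (hd : ∀ (i : Fin n) (j : Fin m), A i ≠ B j ∧ A i ≠ D j ∧ C i ≠ B j ∧ C i ≠ D j)
    (hnc : ∀ (i : Fin n) (j : Fin m), ¬ EdgeCross (A i) (C i) (B j) (D j)) :
    KInterleave (k - 2) C D := by
  have hsdCD := sameDirCD A C B D hint.1 hAC hBD
  by_cases hk : k < 3
  · exact ⟨hsdCD, fun i => absurd i.isLt (by omega), fun i => absurd i.isLt (by omega),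
      fun i j _ => absurd i.isLt (by omega), fun i j _ => absurd i.isLt (by omega),
      Or.inl ⟨fun i => absurd i.isLt (by omega), fun i j _ => absurd i.isLt (by omega)⟩⟩
  · push_neg at hk
    obtain ⟨hsd, f, g, hf, hg, hSI⟩ := hint
    have i0 : Fin k := ⟨0, by omega⟩
    set I0 : Fin k := ⟨0, by omega⟩ with hI0
    set I1 : Fin k := ⟨1, by omega⟩ with hI1
    have h01 : I0 < I1 := Fin.mk_lt_mk.mpr one_pos
    have hfi : f I0 < f I1 := hf h01
    have hgi : g I0 < g I1 := hg h01
    refine ⟨hsdCD, f ∘ shift2 k, g ∘ shift2 k, hf.comp shift2_mono, hg.comp shift2_mono, ?_⟩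
    rcases hSI with ⟨hu1, hu2⟩ | ⟨hu1, hu2⟩ | ⟨hu1, hu2⟩ | ⟨hu1, hu2⟩
    · -- AltUp (A ∘ f) (B ∘ g)
      have hA01 : A (f I0) < A (f I1) := (hu1 I0).trans (hu2 I0 I1 rfl)
      have hB01 : B (g I0) < B (g I1) := (hu2 I0 I1 rfl).trans (hu1 I1)
      have hCanti : StrictAnti C := by
        rcases hAC.1 with ⟨_, h'⟩ | ⟨hAa, _⟩
        · exact h'
        · exact absurd hA01 (hAa hfi).asymm
      have hDanti : StrictAnti D := by
        rcases hBD.1 with ⟨_, h'⟩ | ⟨hBa, _⟩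
        · exact h'
        · exact absurd hB01 (hBa hgi).asymm
      obtain ⟨H1, H2⟩ := coreUp hk (A ∘ f) (B ∘ g) (C ∘ f) (D ∘ g) hu1 hu2
        (by rcases hAC.2 with h' | h'
            · exact Or.inl fun i j => h' (f i) (f j)
            · exact Or.inr fun i j => h' (f j) (f i))
        (by rcases hBD.2 with h' | h'
            · exact Or.inl fun i => h' (g i) (g i)
            · exact Or.inr fun i => h' (g i) (g i))
        (fun i j hij => hDanti (hg hij))
        (fun i j => hd (f i) (g j))
        (fun i j => hnc (f i) (g j))
      refine Or.inr (Or.inr (Or.inl ⟨fun i => ?_, fun i j hij => ?_⟩))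
      · exact H1 (shift2 k i) (by simp [shift2_val]) (by have := i.isLt; simp [shift2_val]; omega)
      · exact H2 (shift2 k i) (shift2 k j) (by simp [shift2_val]; omega)
    · -- AltUp (B ∘ g) (A ∘ f)
      have hB01 : B (g I0) < B (g I1) := (hu1 I0).trans (hu2 I0 I1 rfl)
      have hA01 : A (f I0) < A (f I1) := (hu2 I0 I1 rfl).trans (hu1 I1)
      have hCanti : StrictAnti C := by
        rcases hAC.1 with ⟨_, h'⟩ | ⟨hAa, _⟩
        · exact h'
        · exact absurd hA01 (hAa hfi).asymm
      have hDanti : StrictAnti D := by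
        rcases hBD.1 with ⟨_, h'⟩ | ⟨hBa, _⟩
        · exact h'
        · exact absurd hB01 (hBa hgi).asymm
      obtain ⟨H1, H2⟩ := coreUp hk (B ∘ g) (A ∘ f) (D ∘ g) (C ∘ f) hu1 hu2
        (by rcases hBD.2 with h' | h'
            · exact Or.inl fun i j => h' (g i) (g j)
            · exact Or.inr fun i j => h' (g j) (g i))
        (by rcases hAC.2 with h' | h'
            · exact Or.inl fun i => h' (f i) (f i)
            · exact Or.inr fun i => h' (f i) (f i))
        (fun i j hij => hCanti (hf hij))
        (fun i j => ⟨((hd (f j) (g i)).1).symm, ((hd (f j) (g i)).2.2.1).symm,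
          ((hd (f j) (g i)).2.1).symm, ((hd (f j) (g i)).2.2.2).symm⟩)
        (fun i j h => hnc (f j) (g i) (edgeCross_comm.mp h))
      refine Or.inr (Or.inr (Or.inr ⟨fun i => ?_, fun i j hij => ?_⟩))
      · exact H1 (shift2 k i) (by simp [shift2_val]) (by have := i.isLt; simp [shift2_val]; omega)
      · exact H2 (shift2 k i) (shift2 k j) (by simp [shift2_val]; omega)
    · -- AltDown (A ∘ f) (B ∘ g)
      have hA10 : A (f I1) < A (f I0) := (hu2 I0 I1 rfl).trans (hu1 I0)
      have hB10 : B (g I1) < B (g I0) := (hu1 I1).trans (hu2 I0 I1 rfl)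
      have hCmono : StrictMono C := by
        rcases hAC.1 with ⟨hAm, _⟩ | ⟨_, h'⟩
        · exact absurd hA10 (hAm hfi).asymm
        · exact h'
      have hDmono : StrictMono D := by
        rcases hBD.1 with ⟨hBm, _⟩ | ⟨_, h'⟩
        · exact absurd hB10 (hBm hgi).asymm
        · exact h'
      obtain ⟨H1, H2⟩ := coreDown hk (A ∘ f) (B ∘ g) (C ∘ f) (D ∘ g) hu1 hu2
        (by rcases hAC.2 with h' | h'
            · exact Or.inr fun i j => h' (f j) (f i)
            · exact Or.inl fun i j => h' (f i) (f j))
        (by rcases hBD.2 with h' | h'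
            · exact Or.inr fun i => h' (g i) (g i)
            · exact Or.inl fun i => h' (g i) (g i))
        (fun i j hij => hDmono (hg hij))
        (fun i j => hd (f i) (g j))
        (fun i j => hnc (f i) (g j))
      refine Or.inl ⟨fun i => ?_, fun i j hij => ?_⟩
      · exact H1 (shift2 k i) (by simp [shift2_val]) (by have := i.isLt; simp [shift2_val]; omega)
      · exact H2 (shift2 k i) (shift2 k j) (by simp [shift2_val]; omega)
    · -- AltDown (B ∘ g) (A ∘ f)
      have hB10 : B (g I1) < B (g I0) := (hu2 I0 I1 rfl).trans (hu1 I0)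
      have hA10 : A (f I1) < A (f I0) := (hu1 I1).trans (hu2 I0 I1 rfl)
      have hCmono : StrictMono C := by
        rcases hAC.1 with ⟨hAm, _⟩ | ⟨_, h'⟩
        · exact absurd hA10 (hAm hfi).asymm
        · exact h'
      have hDmono : StrictMono D := by
        rcases hBD.1 with ⟨hBm, _⟩ | ⟨_, h'⟩
        · exact absurd hB10 (hBm hgi).asymm
        · exact h'
      obtain ⟨H1, H2⟩ := coreDown hk (B ∘ g) (A ∘ f) (D ∘ g) (C ∘ f) hu1 hu2
        (by rcases hBD.2 with h' | h'
            · exact Or.inr fun i j => h' (g j) (g i)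
            · exact Or.inl fun i j => h' (g i) (g j))
        (by rcases hAC.2 with h' | h'
            · exact Or.inr fun i => h' (f i) (f i)
            · exact Or.inl fun i => h' (f i) (f i))
        (fun i j hij => hCmono (hf hij))
        (fun i j => ⟨((hd (f j) (g i)).1).symm, ((hd (f j) (g i)).2.2.1).symm,
          ((hd (f j) (g i)).2.1).symm, ((hd (f j) (g i)).2.2.2).symm⟩)
        (fun i j h => hnc (f j) (g i) (edgeCross_comm.mp h))
      refine Or.inr (Or.inl ⟨fun i => ?_, fun i j hij => ?_⟩)
      · exact H1 (shift2 k i) (by simp [shift2_val]) (by have := i.isLt; simp [shift2_val]; omega)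
      · exact H2 (shift2 k i) (shift2 k j) (by simp [shift2_val]; omega)
end

section
/- Let A_1,...,A_k be monotone sequences in a linear order, all monotone in the same direction, such that each consecutive pair A_i, A_{i+1} is bundled (strongly interleaves via a common-color non-crossing matching), and such that A_1 and A_k are both fanned of the same color c (with no two color-c edges crossing). Then the common length of the sequences is at most 2^k·10. -/
variable {α : Type*}

/-! Work with increasing sequences (the decreasing case is its order dual). A bundled pair
`x, y` satisfies `x i < y j` and `y i < x j` whenever `i < j`: one inequality is the pointwise
comparison, the other is the non-crossing of the matching. These "lag" relations compose
additively, so `A 0` and `A (k-1)` are within lag `k`, and the points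
`a j = A 0 (2jk)`, `c j = A (k-1) ((2j+1)k)` alternate. If `L > 6k` there are three gaps
`(a j, a (j+1))`, one of which contains neither `u` nor `v`; there `a j < c j < a (j+1)` lie on
the same side of both `u` and `v`, and one of the fan edges `{a j, u}`, `{a (j+1), u}` crosses
`{c j, v}`. This even gives `L ≤ 6k`. -/

section Preorder

variable [Preorder α]

def WithinLag {n : ℕ} (d : ℕ) (x y : Fin n → α) : Prop :=
  ∀ i j : Fin n, (i : ℕ) + d ≤ j → x i < y j ∧ y i < x j

namespace WithinLag

variable {n d e : ℕ} {x y z : Fin n → α}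

lemma symm (h : WithinLag d x y) : WithinLag d y x :=
  fun i j hij => (h i j hij).symm

lemma trans (hxy : WithinLag d x y) (hyz : WithinLag e y z) : WithinLag (d + e) x z := by
  intro i j hij
  let m : Fin n := ⟨i + d, by omega⟩
  let m' : Fin n := ⟨i + e, by omega⟩
  exact ⟨(hxy i m le_rfl).1.trans (hyz m j (by simp only [m]; omega)).1,
    (hyz i m' le_rfl).2.trans (hxy m' j (by simp only [m']; omega)).2⟩

end WithinLag

lemma StrictMono.withinLag_one_self {n : ℕ} {x : Fin n → α} (hx : StrictMono x) :
    WithinLag 1 x x :=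
  fun _ _ hij => ⟨hx (Fin.lt_def.2 hij), hx (Fin.lt_def.2 hij)⟩

lemma exists_Ioo_disjoint_of_card_lt {m : ℕ} {a : Fin (m + 1) → α} (ha : Monotone a)
    (S : Finset α) (hS : S.card < m) :
    ∃ j : Fin m, ∀ s ∈ S, s ∉ Set.Ioo (a j.castSucc) (a j.succ) := by
  by_contra! h
  choose f hfS hf using h
  have hinj : Function.Injective f := by
    intro i j hij
    by_contra hne
    wlog hlt : i < j generalizing i j
    · exact this hij.symm (Ne.symm hne) (lt_of_le_of_ne (not_lt.1 hlt) (Ne.symm hne))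
    have := ha (Fin.succ_le_castSucc_iff.2 hlt)
    exact ((hf i).2.trans_le this).not_gt (hij ▸ (hf j).1)
  have := Finset.card_le_card_of_injOn (s := Finset.univ) f (fun j _ => hfS j) hinj.injOn
  simp only [Finset.card_univ, Fintype.card_fin] at this
  omega

end Preorder

section LinearOrder

variable [LinearOrder α]

lemma edgeCross_of_lt_of_lt_of_lt {a b c d : α} (hab : a < b) (hbc : b < c) (hcd : c < d) :
    EdgeCross a c b d := by
  left
  simp only [min_eq_left (hab.trans hbc).le, min_eq_left (hbc.trans hcd).le,
    max_eq_right (hab.trans hbc).le, max_eq_right (hbc.trans hcd).le]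
  exact ⟨hab, hbc, hcd⟩

lemma edgeCross_swap_swap {x y z w : α} : EdgeCross y x w z ↔ EdgeCross x y z w := by
  simp only [EdgeCross, min_comm y x, max_comm y x, min_comm w z, max_comm w z]

lemma edgeCross_or_edgeCross_of_notMem_Icc {u v p q r : α} (huv : u ≠ v) (hpq : p < q)
    (hqr : q < r) (hu : u ∉ Set.Icc p r) (hv : v ∉ Set.Icc p r) :
    EdgeCross p u q v ∨ EdgeCross r u q v := by
  simp only [Set.mem_Icc, not_and_or, not_le] at hu hv
  rcases huv.lt_or_gt with h | h <;> rcases hu with hu | hu <;> rcases hv with hv | hv <;>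
    simp only [EdgeCross, min_def, max_def] <;> split_ifs <;> grind

lemma withinLag_one_of_lt_of_nonCrossing {n : ℕ} {x y : Fin n → α} (hx : StrictMono x)
    (hy : StrictMono y) (hlt : ∀ i, x i < y i) (hne : ∀ i j, x i ≠ y j)
    (hcr : ∀ i j, ¬ EdgeCross (x i) (y i) (x j) (y j)) : WithinLag 1 x y := by
  intro i j hij
  have hij : i < j := Fin.lt_def.2 hij
  refine ⟨(hlt i).trans (hy hij), lt_of_not_ge fun hji => hcr i j ?_⟩
  exact edgeCross_of_lt_of_lt_of_lt (hx hij) (hji.lt_of_ne (hne j i)) (hy hij)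

lemma withinLag_one_of_nonCrossing {n : ℕ} {x y : Fin n → α} (hx : StrictMono x)
    (hy : StrictMono y) (hlt : (∀ i, x i < y i) ∨ (∀ i, y i < x i)) (hne : ∀ i j, x i ≠ y j)
    (hcr : ∀ i j, ¬ EdgeCross (x i) (y i) (x j) (y j)) : WithinLag 1 x y := by
  rcases hlt with hlt | hlt
  · exact withinLag_one_of_lt_of_nonCrossing hx hy hlt hne hcr
  · exact (withinLag_one_of_lt_of_nonCrossing hy hx hlt (fun i j h => hne j i h.symm)
      fun i j h => hcr i j (edgeCross_swap_swap.1 h)).symm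

lemma false_of_withinLag_of_fanned {n d : ℕ} {x y : Fin n → α} {u v : α} (huv : u ≠ v)
    (hx : StrictMono x) (hxy : WithinLag d x y) (hn : 6 * d < n)
    (hxuv : ∀ i, x i ≠ u ∧ x i ≠ v) (hfan : ∀ i j, ¬ EdgeCross (x i) u (y j) v) : False := by
  let a : Fin 4 → α := fun j => x ⟨2 * j * d, by have := j.isLt; nlinarith⟩
  let c : Fin 3 → α := fun j => y ⟨(2 * j + 1) * d, by have := j.isLt; nlinarith⟩
  have ha : Monotone a := fun i j hij => hx.monotone <|
    Fin.mk_le_mk.2 (Nat.mul_le_mul_right d (Nat.mul_le_mul_left 2 hij))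
  obtain ⟨j, hj⟩ := exists_Ioo_disjoint_of_card_lt ha {u, v}
    ((Finset.card_le_two).trans_lt (by norm_num))
  have hac : a j.castSucc < c j := (hxy _ _ (by simp only [Fin.val_castSucc]; nlinarith)).1
  have hca : c j < a j.succ := (hxy _ _ (by simp only [Fin.val_succ]; nlinarith)).2
  have houtside : ∀ w ∈ ({u, v} : Finset α), w ∉ Set.Icc (a j.castSucc) (a j.succ) := by
    intro w hw hmem
    have hne : ∀ i, x i ≠ w := by
      simp only [Finset.mem_insert, Finset.mem_singleton] at hw
      rcases hw with rfl | rfl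
      exacts [fun i => (hxuv i).1, fun i => (hxuv i).2]
    exact hj w hw ⟨hmem.1.lt_of_ne (hne _), hmem.2.lt_of_ne (hne _).symm⟩
  rcases edgeCross_or_edgeCross_of_notMem_Icc huv hac hca (houtside u (by simp))
    (houtside v (by simp)) with h | h <;> exact hfan _ _ h

lemma length_le_six_mul_of_strictMono {k L : ℕ} (hk : 0 < k) (A : Fin k → Fin L → α) (u v : α)
    (hmono : ∀ p, StrictMono (A p))
    (hbundle : ∀ (p : Fin k) (h : (p : ℕ) + 1 < k),
      ((∀ i, A p i < A ⟨(p : ℕ) + 1, h⟩ i) ∨ (∀ i, A ⟨(p : ℕ) + 1, h⟩ i < A p i)) ∧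
      ∀ i j, ¬ EdgeCross (A p i) (A ⟨(p : ℕ) + 1, h⟩ i) (A p j) (A ⟨(p : ℕ) + 1, h⟩ j))
    (hinj : Function.Injective (fun q : Fin k × Fin L => A q.1 q.2))
    (huv : u ≠ v) (hpts : ∀ p i, A p i ≠ u ∧ A p i ≠ v)
    (hfan : ∀ i j, ¬ EdgeCross (A ⟨0, hk⟩ i) u (A ⟨k - 1, Nat.sub_lt hk Nat.one_pos⟩ j) v) :
    L ≤ 6 * k := by
  have hstep (p : ℕ) (hp : p + 1 < k) : WithinLag 1 (A ⟨p, by omega⟩) (A ⟨p + 1, hp⟩) :=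
    withinLag_one_of_nonCrossing (hmono _) (hmono _) (hbundle ⟨p, by omega⟩ hp).1
      (fun i j h => by
        simpa using congrArg (fun q => (q.1 : ℕ)) (hinj (a₁ := (_, i)) (a₂ := (_, j)) h))
      (hbundle ⟨p, by omega⟩ hp).2
  have hchain (p : ℕ) (hp : p < k) : WithinLag (p + 1) (A ⟨0, hk⟩) (A ⟨p, hp⟩) := by
    induction p with
    | zero => exact (hmono _).withinLag_one_self
    | succ p ih => exact (ih (by omega)).trans (hstep p hp)
  have hlag := hchain (k - 1) (by omega)
  rw [Nat.sub_add_cancel hk] at hlag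
  by_contra! hL
  exact false_of_withinLag_of_fanned huv (hmono _) hlag hL (fun i => hpts _ i) hfan

end LinearOrder

open OrderDual in
/-- A chain of bundled sequences (same direction, order consistent, joined by a
non-crossing matching) whose first and last members are fanned of the same
colour (fan edges pairwise non-crossing) has length at most `2^k * 10`. -/
theorem stmt11 [LinearOrder α] {k L : ℕ} (hk : 0 < k) (A : Fin k → Fin L → α) (u v : α)
    (hdir : (∀ p, StrictMono (A p)) ∨ (∀ p, StrictAnti (A p)))
    (hbundle : ∀ (p : Fin k) (h : (p : ℕ) + 1 < k),
      ((∀ i, A p i < A ⟨(p : ℕ) + 1, h⟩ i) ∨ (∀ i, A ⟨(p : ℕ) + 1, h⟩ i < A p i)) ∧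
      ∀ i j, ¬ EdgeCross (A p i) (A ⟨(p : ℕ) + 1, h⟩ i) (A p j) (A ⟨(p : ℕ) + 1, h⟩ j))
    (hinj : Function.Injective (fun q : Fin k × Fin L => A q.1 q.2))
    (huv : u ≠ v) (hpts : ∀ p i, A p i ≠ u ∧ A p i ≠ v)
    (hfan : ∀ i j, ¬ EdgeCross (A ⟨0, hk⟩ i) u (A ⟨k - 1, Nat.sub_lt hk Nat.one_pos⟩ j) v) :
    L ≤ 2 ^ k * 10 := by
  suffices L ≤ 6 * k from this.trans (by have := Nat.lt_two_pow_self (n := k); omega)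
  rcases hdir with hmono | hanti
  · exact length_le_six_mul_of_strictMono hk A u v hmono hbundle hinj huv hpts hfan
  · exact length_le_six_mul_of_strictMono (α := αᵒᵈ) hk (fun p i => toDual (A p i))
      (toDual u) (toDual v) (fun p => (hanti p).dual_right)
      (fun p h => ⟨(hbundle p h).1.symm,
        fun i j hc => (hbundle p h).2 i j (edgeCross_toDual.1 hc)⟩)
      (fun _ _ h => hinj (toDual.injective h)) (toDual.injective.ne huv) hpts
      (fun i j hc => hfan i j (edgeCross_toDual.1 hc))
end

section
/- Let A and B be 2-dimensional lex-monotone arrays of points in a linear order, each with at least 3 values in each coordinate, both with identity permutation, and sign vectors s_A, s_B. Suppose for each i the rows A(i,·) and B(i,·) are order consistent, monotone, and uniformly adjacent of a common color in a stack layout (hence if same direction, they strongly interleave). Then it cannot happen that s_A(1) ≠ s_B(1) while s_A(2) = s_B(2). -/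
variable {α : Type*}

/-- A 2-dimensional lex-monotone array with identity permutation and sign
vector `(s1, s2)` (`true` = increasing). -/
def LexMono2 [LinearOrder α] {n m : ℕ} (f : Fin n → Fin m → α) (s1 s2 : Bool) : Prop :=
  (∀ (x x' : Fin n) (y y' : Fin m), x ≠ x' →
    (f x y < f x' y' ↔ (if s1 then x < x' else x' < x))) ∧
  (∀ (x : Fin n) (y y' : Fin m), y ≠ y' →
    (f x y < f x y' ↔ (if s2 then y < y' else y' < y)))

lemma edgecross_symm12 [LinearOrder α] {x y z w : α} (h : EdgeCross y x w z) :
    EdgeCross x y z w := by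
  unfold EdgeCross at h ⊢
  rw [min_comm y x, max_comm y x, min_comm w z, max_comm w z] at h
  exact h

lemma sep_inc12 [LinearOrder α] {m : ℕ} {a b : Fin m → α}
    (ha : StrictMono a) (hb : StrictMono b) (hab : ∀ j, a j < b j)
    (hnc : ∀ j j', ¬ EdgeCross (a j) (b j) (a j') (b j'))
    (hne : ∀ j j', a j ≠ b j') {j j' : Fin m} (h : j < j') : b j < a j' := by
  by_contra hc
  push_neg at hc
  have h1 : a j' < b j := lt_of_le_of_ne hc (hne j' j)
  apply hnc j j'
  left
  rw [min_eq_left (hab j).le, max_eq_right (hab j).le,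
    min_eq_left (hab j').le, max_eq_right (hab j').le]
  exact ⟨ha h, h1, hb h⟩

lemma sep_dec12 [LinearOrder α] {m : ℕ} {a b : Fin m → α}
    (ha : StrictAnti a) (hb : StrictAnti b) (hab : ∀ j, a j < b j)
    (hnc : ∀ j j', ¬ EdgeCross (a j) (b j) (a j') (b j'))
    (hne : ∀ j j', a j ≠ b j') {j j' : Fin m} (h : j < j') : b j' < a j := by
  by_contra hc
  push_neg at hc
  have h1 : a j < b j' := lt_of_le_of_ne hc (hne j j')
  apply hnc j j'
  right
  rw [min_eq_left (hab j).le, max_eq_right (hab j).le,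
    min_eq_left (hab j').le, max_eq_right (hab j').le]
  exact ⟨ha h, h1, hb h⟩

lemma rowfact_inc12 [LinearOrder α] {m : ℕ} {a b : Fin m → α}
    (ha : StrictMono a) (hb : StrictMono b)
    (hoc : (∀ j, a j < b j) ∨ (∀ j, b j < a j))
    (hnc : ∀ j j', ¬ EdgeCross (a j) (b j) (a j') (b j'))
    (hne : ∀ j j', a j ≠ b j') {j j' : Fin m} (h : j < j') :
    a j < b j' ∧ b j < a j' := by
  rcases hoc with hab | hba
  · exact ⟨(hab j).trans (hb h), sep_inc12 ha hb hab hnc hne h⟩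
  · have hne' : ∀ j j', b j ≠ a j' := fun j j' => (hne j' j).symm
    have hnc' : ∀ j j', ¬ EdgeCross (b j) (a j) (b j') (a j') :=
      fun j j' hc => hnc j j' (edgecross_symm12 hc)
    exact ⟨sep_inc12 hb ha hba hnc' hne' h, (hba j).trans (ha h)⟩

lemma rowfact_dec12 [LinearOrder α] {m : ℕ} {a b : Fin m → α}
    (ha : StrictAnti a) (hb : StrictAnti b)
    (hoc : (∀ j, a j < b j) ∨ (∀ j, b j < a j))
    (hnc : ∀ j j', ¬ EdgeCross (a j) (b j) (a j') (b j'))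
    (hne : ∀ j j', a j ≠ b j') {j j' : Fin m} (h : j < j') :
    a j' < b j ∧ b j' < a j := by
  rcases hoc with hab | hba
  · exact ⟨(hab j').trans (hb h), sep_dec12 ha hb hab hnc hne h⟩
  · have hne' : ∀ j j', b j ≠ a j' := fun j j' => (hne j' j).symm
    have hnc' : ∀ j j', ¬ EdgeCross (b j) (a j) (b j') (a j') :=
      fun j j' hc => hnc j j' (edgecross_symm12 hc)
    exact ⟨sep_dec12 hb ha hba hnc' hne' h, (hba j').trans (ha h)⟩

lemma main12 [LinearOrder α] {n m : ℕ} (hn : 3 ≤ n) (hm : 3 ≤ m)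
    (A B : Fin n → Fin m → α) (s2 : Bool)
    (hA : LexMono2 A true s2) (hB : LexMono2 B false s2)
    (hd : ∀ i j i' j', A i j ≠ B i' j')
    (hrel : ∀ i, ((∀ j, A i j < B i j) ∨ (∀ j, B i j < A i j)) ∧
      ∀ j j', ¬ EdgeCross (A i j) (B i j) (A i j') (B i j')) : False := by
  set i0 : Fin n := ⟨0, by omega⟩ with hi0
  set i2 : Fin n := ⟨2, by omega⟩ with hi2
  set j0 : Fin m := ⟨0, by omega⟩ with hj0
  set j1 : Fin m := ⟨1, by omega⟩ with hj1
  have hi : i0 < i2 := Fin.mk_lt_mk.mpr (by omega)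
  have hj : j0 < j1 := Fin.mk_lt_mk.mpr (by omega)
  cases s2
  · -- rows strictly antitone
    have mAi : ∀ i, StrictAnti (A i) := fun i j j' h =>
      (hA.2 i j' j h.ne').mpr (by simpa using h)
    have mBi : ∀ i, StrictAnti (B i) := fun i j j' h =>
      (hB.2 i j' j h.ne').mpr (by simpa using h)
    have F : ∀ i : Fin n, A i j1 < B i j0 ∧ B i j1 < A i j0 := fun i =>
      rowfact_dec12 (mAi i) (mBi i) (hrel i).1 (hrel i).2 (fun j j' => hd i j i j') hj
    have c1 : A i2 j1 < B i2 j0 := (F i2).1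
    have c2 : B i2 j0 < B i0 j1 := (hB.1 i2 i0 j0 j1 hi.ne').mpr (by simpa using hi)
    have c3 : B i0 j1 < A i0 j0 := (F i0).2
    have c4 : A i0 j0 < A i2 j1 := (hA.1 i0 i2 j0 j1 hi.ne).mpr (by simpa using hi)
    exact lt_irrefl _ (c1.trans (c2.trans (c3.trans c4)))
  · -- rows strictly monotone
    have mAi : ∀ i, StrictMono (A i) := fun i j j' h =>
      (hA.2 i j j' h.ne).mpr (by simpa using h)
    have mBi : ∀ i, StrictMono (B i) := fun i j j' h =>
      (hB.2 i j j' h.ne).mpr (by simpa using h)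
    have F : ∀ i : Fin n, A i j0 < B i j1 ∧ B i j0 < A i j1 := fun i =>
      rowfact_inc12 (mAi i) (mBi i) (hrel i).1 (hrel i).2 (fun j j' => hd i j i j') hj
    have c1 : A i2 j0 < B i2 j1 := (F i2).1
    have c2 : B i2 j1 < B i0 j0 := (hB.1 i2 i0 j1 j0 hi.ne').mpr (by simpa using hi)
    have c3 : B i0 j0 < A i0 j1 := (F i0).2
    have c4 : A i0 j1 < A i2 j0 := (hA.1 i0 i2 j1 j0 hi.ne).mpr (by simpa using hi)
    exact lt_irrefl _ (c1.trans (c2.trans (c3.trans c4)))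

/-- For 2-dimensional lex-monotone arrays with identity permutation whose
corresponding rows are related (order consistent and joined by a non-crossing
matching), it cannot happen that the first signs differ while the second signs
agree. -/
theorem stmt12 [LinearOrder α] {n m : ℕ} (hn : 3 ≤ n) (hm : 3 ≤ m)
    (A B : Fin n → Fin m → α) (sA1 sA2 sB1 sB2 : Bool)
    (hA : LexMono2 A sA1 sA2) (hB : LexMono2 B sB1 sB2)
    (hd : ∀ i j i' j', A i j ≠ B i' j')
    (hrel : ∀ i, ((∀ j, A i j < B i j) ∨ (∀ j, B i j < A i j)) ∧
      ∀ j j', ¬ EdgeCross (A i j) (B i j) (A i j') (B i j')) :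
    ¬ (sA1 ≠ sB1 ∧ sA2 = sB2) := by
  rintro ⟨h1, h2⟩
  subst h2
  cases sA1 <;> cases sB1
  · exact h1 rfl
  · exact main12 hn hm B A sA2 hB hA (fun i j i' j' => (hd i' j' i j).symm)
      (fun i => ⟨(hrel i).1.symm, fun j j' h => (hrel i).2 j j' (edgecross_symm12 h)⟩)
  · exact main12 hn hm A B sA2 hA hB hd hrel
  · exact h1 rfl
end

section
/- In any 2-coloring of the n×m hexagonal grid, the color-boundary subgraph of the dual graph (consisting of dual edges bordering two differently colored hexagons) has every vertex of degree 0, 1, or 2, with degree-1 vertices occurring only at border vertices of the dual graph; consequently its edge set decomposes into vertex-disjoint paths and cycles, where every path starts and ends at border vertices. -/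
/-- The hexagon `(i,j)` belongs to the `n × m` hexagonal grid. -/
def hexOK (n m : ℕ) (p : ℤ × ℤ) : Prop :=
  1 ≤ p.1 ∧ p.1 ≤ (n : ℤ) ∧ 1 ≤ p.2 ∧ p.2 ≤ (m : ℤ)

/-- Vertices of the dual graph: `(i, j, false)` is the point where hexagons
`(i,j), (i-1,j), (i-1,j+1)` meet, and `(i, j, true)` the point where
`(i,j), (i,j+1), (i-1,j+1)` meet. -/
abbrev DualV := ℤ × ℤ × Bool

/-- The (up to three) hexagons meeting at a dual vertex. -/
def hexesOf (v : DualV) : Set (ℤ × ℤ) :=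
  if v.2.2 then {(v.1, v.2.1), (v.1, v.2.1 + 1), (v.1 - 1, v.2.1 + 1)}
  else {(v.1, v.2.1), (v.1 - 1, v.2.1), (v.1 - 1, v.2.1 + 1)}

/-- The three types of dual edges out of a `-` vertex. -/
def dualBase (v w : DualV) : Prop :=
  v.2.2 = false ∧
    (w = (v.1, v.2.1, true) ∨ w = (v.1 - 1, v.2.1, true) ∨ w = (v.1, v.2.1 - 1, true))

/-- Adjacency in the dual graph. -/
def dualAdj (v w : DualV) : Prop := dualBase v w ∨ dualBase w v

/-- A dual edge lies on the colour boundary: the two grid hexagons it separates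
are both in the grid and have different colours. -/
def boundaryAdj (n m : ℕ) (χ : ℤ × ℤ → Bool) (v w : DualV) : Prop :=
  dualAdj v w ∧ ∃ p q : ℤ × ℤ, p ∈ hexesOf v ∩ hexesOf w ∧ q ∈ hexesOf v ∩ hexesOf w ∧
    p ≠ q ∧ hexOK n m p ∧ hexOK n m q ∧ χ p ≠ χ q

/-- The colour-boundary subgraph of the dual graph. -/
def bGraph (n m : ℕ) (χ : ℤ × ℤ → Bool) : SimpleGraph DualV where
  Adj v w := v ≠ w ∧ (boundaryAdj n m χ v w ∨ boundaryAdj n m χ w v)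
  symm := ⟨fun _ _ h => ⟨h.1.symm, h.2.symm⟩⟩
  loopless := ⟨fun _ h => h.1 rfl⟩

/-- A border vertex of the dual graph: one of its hexagons lies outside the grid. -/
def onBorder (n m : ℕ) (v : DualV) : Prop := ¬ ∀ p ∈ hexesOf v, hexOK n m p

/-!
At a dual vertex the three surrounding hexagons carry only two colours, so at most two of the three
dual edges there separate different colours, and when all three hexagons lie in the grid the
number of separating edges is even. Hence every vertex of the boundary graph has degree at most 2,
and degree 1 only on the border. The boundary graph has finite support, so by the handshake lemma
the component of a degree-1 vertex contains a second vertex of odd, hence unit, degree.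
-/

namespace SimpleGraph

variable {V : Type*} {G : SimpleGraph V}

theorem exists_ne_reachable_odd_ncard_neighborSet (hG : G.support.Finite) {v : V}
    (hv : Odd (G.neighborSet v).ncard) :
    ∃ w, w ≠ v ∧ G.Reachable v w ∧ Odd (G.neighborSet w).ncard := by
  classical
  set s := {w | G.Reachable v w}
  have hs : s.Finite := (hG.insert v).subset fun w hw => by
    by_cases hwv : w = v
    · exact .inl hwv
    · exact .inr (mem_support_of_reachable hwv (hw : G.Reachable v w).symm)
  have := hs.fintype
  have hdeg (x : s) : (G.induce s).degree x = (G.neighborSet x).ncard := by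
    have hsub : G.neighborSet x ⊆ Set.range ((↑) : s → V) := fun y hy =>
      ⟨⟨y, x.2.trans (Adj.reachable hy)⟩, rfl⟩
    rw [← card_neighborSet_eq_degree, ← Nat.card_eq_fintype_card, Nat.card_coe_set_eq,
      neighborSet_induce, Set.ncard_preimage_of_injective_subset_range Subtype.val_injective hsub]
  obtain ⟨w, hwv, hw⟩ := (G.induce s).exists_ne_odd_degree_of_exists_odd_degree
    ⟨v, Reachable.refl v⟩ (by rwa [hdeg])
  exact ⟨w, fun h => hwv (Subtype.ext h), w.2, by rwa [hdeg] at hw⟩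

open Classical in
theorem ncard_neighborSet_eq_of_three {v w₁ w₂ w₃ : V} {P₁ P₂ P₃ : Prop}
    (h₁₂ : w₁ ≠ w₂) (h₁₃ : w₁ ≠ w₃) (h₂₃ : w₂ ≠ w₃)
    (hadj : ∀ w, G.Adj v w → w = w₁ ∨ w = w₂ ∨ w = w₃)
    (hP₁ : G.Adj v w₁ ↔ P₁) (hP₂ : G.Adj v w₂ ↔ P₂) (hP₃ : G.Adj v w₃ ↔ P₃) :
    (G.neighborSet v).ncard =
      (if P₁ then 1 else 0) + (if P₂ then 1 else 0) + (if P₃ then 1 else 0) := by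
  have hN : G.neighborSet v = {w | w = w₁ ∧ P₁ ∨ w = w₂ ∧ P₂ ∨ w = w₃ ∧ P₃} := by
    ext w
    refine ⟨fun h => ?_, ?_⟩
    · rcases hadj w h with rfl | rfl | rfl <;> simp_all
    · rintro (⟨rfl, h⟩ | ⟨rfl, h⟩ | ⟨rfl, h⟩) <;> simp_all
  rw [hN]
  by_cases P₁ <;> by_cases P₂ <;> by_cases P₃ <;>
    simp_all [Set.ofPred_or, Set.ncard_insert_of_notMem, h₁₂.symm, h₁₃.symm, h₂₃.symm]

end SimpleGraph

def IsBoundaryPair (n m : ℕ) (χ : ℤ × ℤ → Bool) (p q : ℤ × ℤ) : Prop :=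
  hexOK n m p ∧ hexOK n m q ∧ χ p ≠ χ q

section BoundaryGraph

variable {n m : ℕ} {χ : ℤ × ℤ → Bool}

theorem isBoundaryPair_comm {p q : ℤ × ℤ} :
    IsBoundaryPair n m χ p q ↔ IsBoundaryPair n m χ q p := by
  unfold IsBoundaryPair
  grind

theorem exists_mem_pair_boundary_iff {p q : ℤ × ℤ} (hpq : p ≠ q) :
    (∃ p' q', p' ∈ ({p, q} : Set (ℤ × ℤ)) ∧ q' ∈ ({p, q} : Set (ℤ × ℤ)) ∧ p' ≠ q' ∧
      hexOK n m p' ∧ hexOK n m q' ∧ χ p' ≠ χ q') ↔ IsBoundaryPair n m χ p q := by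
  constructor
  · rintro ⟨p', q', hp' | hp', hq' | hq', hne, h⟩ <;> subst_vars
    all_goals first | exact absurd rfl hne | exact h | exact isBoundaryPair_comm.mp h
  · exact fun h => ⟨p, q, .inl rfl, .inr rfl, hpq, h⟩

theorem bGraph_adj_iff {v w : DualV} :
    (bGraph n m χ).Adj v w ↔ v ≠ w ∧ boundaryAdj n m χ v w := by
  have (v w : DualV) : boundaryAdj n m χ v w → boundaryAdj n m χ w v :=
    fun ⟨hd, p, q, hp, hq, h⟩ => ⟨hd.symm, p, q, ⟨hp.2, hp.1⟩, ⟨hq.2, hq.1⟩, h⟩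
  exact and_congr_right fun _ => or_iff_left_of_imp (this w v)

theorem bGraph_adj_iff_of_hexesOf_inter {v w : DualV} {p q : ℤ × ℤ} (hvw : dualAdj v w)
    (hne : v ≠ w) (hpq : p ≠ q) (hinter : hexesOf v ∩ hexesOf w = {p, q}) :
    (bGraph n m χ).Adj v w ↔ IsBoundaryPair n m χ p q := by
  rw [bGraph_adj_iff, boundaryAdj, hinter, exists_mem_pair_boundary_iff hpq]
  exact ⟨fun h => h.2.2, fun h => ⟨hne, hvw, h⟩⟩

theorem dualAdj_false_iff {i j : ℤ} {w : DualV} :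
    dualAdj (i, j, false) w ↔ w = (i, j, true) ∨ w = (i - 1, j, true) ∨ w = (i, j - 1, true) := by
  simp [dualAdj, dualBase]

theorem dualAdj_true_iff {i j : ℤ} {w : DualV} :
    dualAdj (i, j, true) w ↔ w = (i, j, false) ∨ w = (i, j + 1, false) ∨ w = (i + 1, j, false) := by
  obtain ⟨a, b, _ | _⟩ := w
  · simp [dualAdj, dualBase, Prod.ext_iff]
    omega
  · simp [dualAdj, dualBase]

open Classical in
theorem ncard_neighborSet_bGraph_false (i j : ℤ) :
    ((bGraph n m χ).neighborSet (i, j, false)).ncard =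
      (if IsBoundaryPair n m χ (i, j) (i - 1, j + 1) then 1 else 0) +
      (if IsBoundaryPair n m χ (i - 1, j) (i - 1, j + 1) then 1 else 0) +
      (if IsBoundaryPair n m χ (i, j) (i - 1, j) then 1 else 0) := by
  refine SimpleGraph.ncard_neighborSet_eq_of_three (by grind) (by grind) (by grind)
    (fun w h => dualAdj_false_iff.mp (bGraph_adj_iff.mp h).2.1) ?_ ?_ ?_ <;>
  refine bGraph_adj_iff_of_hexesOf_inter (dualAdj_false_iff.mpr (by simp)) (by simp) (by grind)
    ?_ <;>
  ext ⟨a, b⟩ <;> simp [hexesOf] <;> omega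

open Classical in
theorem ncard_neighborSet_bGraph_true (i j : ℤ) :
    ((bGraph n m χ).neighborSet (i, j, true)).ncard =
      (if IsBoundaryPair n m χ (i, j) (i - 1, j + 1) then 1 else 0) +
      (if IsBoundaryPair n m χ (i, j + 1) (i - 1, j + 1) then 1 else 0) +
      (if IsBoundaryPair n m χ (i, j) (i, j + 1) then 1 else 0) := by
  refine SimpleGraph.ncard_neighborSet_eq_of_three (by grind) (by grind) (by grind)
    (fun w h => dualAdj_true_iff.mp (bGraph_adj_iff.mp h).2.1) ?_ ?_ ?_ <;>
  refine bGraph_adj_iff_of_hexesOf_inter (dualAdj_true_iff.mpr (by simp)) (by simp) (by grind)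
    ?_ <;>
  ext ⟨a, b⟩ <;> simp [hexesOf] <;> omega

open Classical in
theorem exists_hexesOf_eq_and_ncard_neighborSet_bGraph (v : DualV) :
    ∃ a b c, hexesOf v = {a, b, c} ∧ ((bGraph n m χ).neighborSet v).ncard =
      (if IsBoundaryPair n m χ a c then 1 else 0) + (if IsBoundaryPair n m χ b c then 1 else 0) +
      (if IsBoundaryPair n m χ a b then 1 else 0) := by
  obtain ⟨i, j, _ | _⟩ := v
  · exact ⟨_, _, _, rfl, ncard_neighborSet_bGraph_false i j⟩
  · exact ⟨_, _, _, rfl, ncard_neighborSet_bGraph_true i j⟩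

open Classical in
theorem ite_isBoundaryPair_triangle_le (a b c : ℤ × ℤ) :
    (if IsBoundaryPair n m χ a c then 1 else 0) + (if IsBoundaryPair n m χ b c then 1 else 0) +
      (if IsBoundaryPair n m χ a b then 1 else 0) ≤ 2 := by
  unfold IsBoundaryPair
  generalize χ a = x, χ b = y, χ c = z
  cases x <;> cases y <;> cases z <;> simp <;> split_ifs <;> omega

open Classical in
theorem ite_isBoundaryPair_triangle_ne_one {a b c : ℤ × ℤ} (ha : hexOK n m a)
    (hb : hexOK n m b) (hc : hexOK n m c) :
    (if IsBoundaryPair n m χ a c then 1 else 0) + (if IsBoundaryPair n m χ b c then 1 else 0) +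
      (if IsBoundaryPair n m χ a b then 1 else 0) ≠ 1 := by
  unfold IsBoundaryPair
  generalize χ a = x, χ b = y, χ c = z
  cases x <;> cases y <;> cases z <;> simp [ha, hb, hc]

theorem ncard_neighborSet_bGraph_le_two (v : DualV) :
    ((bGraph n m χ).neighborSet v).ncard ≤ 2 := by
  obtain ⟨a, b, c, -, hcard⟩ :=
    exists_hexesOf_eq_and_ncard_neighborSet_bGraph (n := n) (m := m) (χ := χ) v
  exact hcard ▸ ite_isBoundaryPair_triangle_le a b c

theorem onBorder_of_ncard_neighborSet_bGraph_eq_one {v : DualV}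
    (hv : ((bGraph n m χ).neighborSet v).ncard = 1) : onBorder n m v := by
  obtain ⟨a, b, c, hhex, hcard⟩ := exists_hexesOf_eq_and_ncard_neighborSet_bGraph (χ := χ) v
  intro hall
  rw [hhex] at hall
  exact ite_isBoundaryPair_triangle_ne_one (hall a (by simp)) (hall b (by simp)) (hall c (by simp))
    (hcard ▸ hv)

theorem bGraph_support_finite : (bGraph n m χ).support.Finite := by
  refine ((Set.finite_Icc (0 : ℤ) (n + 1)).prod
    ((Set.finite_Icc (0 : ℤ) (m + 1)).prod Set.finite_univ)).subset ?_
  rintro ⟨i, j, t⟩ ⟨w, hw⟩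
  obtain ⟨-, -, p, -, ⟨hp, -⟩, -, -, ⟨h1, h2, h3, h4⟩, -⟩ := bGraph_adj_iff.mp hw
  cases t <;> simp only [hexesOf] at hp <;> rcases hp with rfl | rfl | rfl <;> simp at * <;> omega

end BoundaryGraph

/-- In any 2-colouring of the `n × m` hexagonal grid, the colour-boundary
subgraph of the dual graph has every vertex of degree at most 2, degree-1
vertices occur only on the border, and consequently the boundary decomposes
into paths and cycles where every path starts and ends at border vertices:
from each degree-1 vertex there is a boundary path to another degree-1 border
vertex. -/
theorem stmt14 (n m : ℕ) (χ : ℤ × ℤ → Bool) :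
    (∀ v : DualV, ((bGraph n m χ).neighborSet v).ncard ≤ 2) ∧
    (∀ v : DualV, ((bGraph n m χ).neighborSet v).ncard = 1 → onBorder n m v) ∧
    (∀ v : DualV, ((bGraph n m χ).neighborSet v).ncard = 1 →
      ∃ w : DualV, w ≠ v ∧ ((bGraph n m χ).neighborSet w).ncard = 1 ∧ onBorder n m w ∧
        Nonempty ((bGraph n m χ).Path v w)) := by
  refine ⟨ncard_neighborSet_bGraph_le_two, fun v => onBorder_of_ncard_neighborSet_bGraph_eq_one,
    fun v hv => ?_⟩
  obtain ⟨w, hwv, hvw, hw⟩ :=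
    SimpleGraph.exists_ne_reachable_odd_ncard_neighborSet bGraph_support_finite (hv ▸ odd_one)
  have hw₁ : ((bGraph n m χ).neighborSet w).ncard = 1 := by
    have := ncard_neighborSet_bGraph_le_two (n := n) (m := m) (χ := χ) w
    obtain ⟨k, hk⟩ := hw
    omega
  exact ⟨w, hwv, hw₁, onBorder_of_ncard_neighborSet_bGraph_eq_one hw₁, ⟨hvw.some.toPath⟩⟩
end

section
/- (Hex Lemma) In any 2-coloring of the vertices of the n×n hexagonal grid, there exists a monochromatic path of length at least n. -/
/-- One direction of adjacency in the hexagonal grid: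
`(i+1,j) ∼ (i,j)`, `(i+1,j) ∼ (i,j+1)`, `(i,j) ∼ (i,j+1)`. -/
def hexRel (u v : ℤ × ℤ) : Prop :=
  (u.1 = v.1 + 1 ∧ u.2 = v.2) ∨ (u.1 = v.1 + 1 ∧ v.2 = u.2 + 1) ∨
  (u.1 = v.1 ∧ v.2 = u.2 + 1)

/-- Adjacency in the hexagonal grid graph. -/
def hexAdj (u v : ℤ × ℤ) : Prop := hexRel u v ∨ hexRel v u

/-- Membership in the `n × n` grid. -/
def inGrid (n : ℕ) (p : ℤ × ℤ) : Prop :=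
  1 ≤ p.1 ∧ p.1 ≤ (n : ℤ) ∧ 1 ≤ p.2 ∧ p.2 ≤ (n : ℤ)

/-!
The Hex lemma follows from the Y lemma: in every 2-colouring of the triangle
`Tₙ = {i, j ≥ 1, i + j ≤ n + 1}` some monochromatic connected set meets all three sides.
The Y lemma is proved by induction: the upward unit triangles (cells) of `Tₙ₊₁` are indexed by
the points of `Tₙ`, and colouring each point of `Tₙ` by the majority colour of its cell, a
monochromatic Y of `Tₙ` lifts to one of `Tₙ₊₁`, because the cells of two adjacent points
share a vertex and their remaining vertices are adjacent across the shared one.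

The `n × n` rhombus sits in the corner of `T₂ₙ₋₁`; padding the rest of the triangle with
`true` beyond row `n` and `false` beyond column `n` forces the Y to cross the rhombus between
two opposite sides, and the crossing yields a monochromatic path with at least `n` vertices.
-/

namespace SimpleGraph.Walk

variable {V : Type*} {G : SimpleGraph V} {f : V → ℤ}

theorem le_add_length (hf : ∀ u v, G.Adj u v → f v ≤ f u + 1) {a b : V} (p : G.Walk a b) :
    f b ≤ f a + p.length := by
  induction p with
  | nil => simp
  | cons h p ih =>
    have := hf _ _ h
    rw [length_cons]
    push_cast
    omega

theorem exists_walk_to_level (hf : ∀ u v, G.Adj u v → f v ≤ f u + 1) {a b : V}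
    (p : G.Walk a b) {N : ℤ} (ha : f a ≤ N) (hb : N ≤ f b) :
    ∃ (c : V) (q : G.Walk a c), f c = N ∧ q.support ⊆ p.support ∧ ∀ x ∈ q.support, f x ≤ N := by
  induction p with
  | nil => exact ⟨_, nil, le_antisymm ha hb, List.Subset.refl _, by simpa using ha⟩
  | @cons a w b h p ih =>
    by_cases haN : N ≤ f a
    · exact ⟨a, nil, le_antisymm ha haN, by simp, by simpa using ha⟩
    · obtain ⟨c, q, hc, hsub, hle⟩ := ih (by have := hf _ _ h; omega) hb
      refine ⟨c, cons h q, hc, List.cons_subset_cons _ hsub, ?_⟩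
      simpa [ha] using hle

theorem exists_path_to_level [DecidableEq V] (hf : ∀ u v, G.Adj u v → f v ≤ f u + 1) {a b : V}
    (p : G.Walk a b) {N : ℤ} (ha : f a ≤ N) (hb : N ≤ f b) :
    ∃ (c : V) (q : G.Walk a c), q.IsPath ∧ f c = N ∧ q.support ⊆ p.support ∧
      ∀ x ∈ q.support, f x ≤ N := by
  obtain ⟨c, q, hc, hsub, hle⟩ := p.exists_walk_to_level hf ha hb
  exact ⟨c, q.bypass, q.bypass_isPath, hc, List.Subset.trans q.support_bypass_subset_support hsub,
    fun x hx => hle x (q.support_bypass_subset_support hx)⟩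

end SimpleGraph.Walk

lemma hexAdj_fst_le {u v : ℤ × ℤ} (h : hexAdj u v) : v.1 ≤ u.1 + 1 := by
  rcases h with (h | h | h) | (h | h | h) <;> omega

lemma hexAdj_snd_le {u v : ℤ × ℤ} (h : hexAdj u v) : v.2 ≤ u.2 + 1 := by
  rcases h with (h | h | h) | (h | h | h) <;> omega

def hexGraphOn (S : Set (ℤ × ℤ)) : SimpleGraph (ℤ × ℤ) where
  Adj u v := hexAdj u v ∧ u ∈ S ∧ v ∈ S
  symm := ⟨fun _ _ ⟨h, hu, hv⟩ => ⟨Or.symm h, hv, hu⟩⟩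
  loopless := ⟨fun _ ⟨h, _⟩ => by rcases h with (h | h | h) | (h | h | h) <;> omega⟩

lemma hexGraphOn_adj {S : Set (ℤ × ℤ)} {u v : ℤ × ℤ} :
    (hexGraphOn S).Adj u v ↔ hexAdj u v ∧ u ∈ S ∧ v ∈ S := Iff.rfl

lemma hexGraphOn.mem_of_mem_support {S : Set (ℤ × ℤ)} {a b : ℤ × ℤ} (p : (hexGraphOn S).Walk a b)
    (ha : a ∈ S) : ∀ x ∈ p.support, x ∈ S := by
  induction p with
  | nil => simpa using ha
  | cons h p ih => simpa [ha] using ih (hexGraphOn_adj.mp h).2.2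

def triangle (n : ℕ) : Set (ℤ × ℤ) := {p | 1 ≤ p.1 ∧ 1 ≤ p.2 ∧ p.1 + p.2 ≤ n + 1}

def cell (p : ℤ × ℤ) : Set (ℤ × ℤ) := {p, (p.1 + 1, p.2), (p.1, p.2 + 1)}

def majority (χ : ℤ × ℤ → Bool) (p : ℤ × ℤ) : Bool :=
  (χ p && χ (p.1 + 1, p.2)) || (χ p && χ (p.1, p.2 + 1)) ||
    (χ (p.1 + 1, p.2) && χ (p.1, p.2 + 1))

lemma Bool.eq_or_eq_of_maj_eq {x y z c : Bool} (h : (x && y || x && z || y && z) = c) :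
    (x = c ∨ y = c) ∧ (x = c ∨ z = c) ∧ (y = c ∨ z = c) := by
  revert h; cases x <;> cases y <;> cases z <;> cases c <;> decide

section Majority

variable {n : ℕ} {χ : ℤ × ℤ → Bool} {c : Bool}

lemma hexAdj_of_mem_cell {p q r : ℤ × ℤ} (hq : q ∈ cell p) (hr : r ∈ cell p) (hqr : q ≠ r) :
    hexAdj q r := by
  simp only [cell, Set.mem_insert_iff, Set.mem_singleton_iff] at hq hr
  rcases hq with rfl | rfl | rfl <;> rcases hr with rfl | rfl | rfl <;>
    simp_all [hexAdj, hexRel]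

lemma mem_triangle_succ_of_mem_cell {p q : ℤ × ℤ} (hp : p ∈ triangle n)
    (hq : q ∈ cell p) : q ∈ triangle (n + 1) := by
  simp only [triangle, cell, Set.mem_insert_iff, Set.mem_singleton_iff, Set.mem_ofPred_eq] at *
  push_cast
  rcases hq with rfl | rfl | rfl <;> omega

lemma eq_or_eq_of_majority_eq {p q r : ℤ × ℤ} (h : majority χ p = c)
    (hq : q ∈ cell p) (hr : r ∈ cell p) (hqr : q ≠ r) : χ q = c ∨ χ r = c := by
  have := Bool.eq_or_eq_of_maj_eq h
  simp only [cell, Set.mem_insert_iff, Set.mem_singleton_iff] at hq hr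
  rcases hq with rfl | rfl | rfl <;> rcases hr with rfl | rfl | rfl <;>
    first | exact absurd rfl hqr | tauto

lemma exists_mem_cell_of_majority_eq {p q r : ℤ × ℤ} (h : majority χ p = c)
    (hq : q ∈ cell p) (hr : r ∈ cell p) (hqr : q ≠ r) {P : ℤ × ℤ → Prop} (hPq : P q)
    (hPr : P r) : ∃ a ∈ cell p, χ a = c ∧ P a := by
  rcases eq_or_eq_of_majority_eq h hq hr hqr with hc | hc
  exacts [⟨q, hq, hc, hPq⟩, ⟨r, hr, hc, hPr⟩]

lemma reachable_of_mem_cell {p q r : ℤ × ℤ}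
    (hp : p ∈ triangle n) (hq : q ∈ cell p) (hr : r ∈ cell p) (hcq : χ q = c) (hcr : χ r = c) :
    (hexGraphOn {x ∈ triangle (n + 1) | χ x = c}).Reachable q r := by
  obtain rfl | hqr := eq_or_ne q r
  · rfl
  · exact SimpleGraph.Adj.reachable ⟨hexAdj_of_mem_cell hq hr hqr,
      ⟨mem_triangle_succ_of_mem_cell hp hq, hcq⟩, ⟨mem_triangle_succ_of_mem_cell hp hr, hcr⟩⟩

lemma exists_cell_bridge_of_hexRel {u v : ℤ × ℤ} (h : hexRel u v) :
    ∃ s x y, s ∈ cell u ∧ s ∈ cell v ∧ x ∈ cell u ∧ y ∈ cell v ∧ x ≠ s ∧ y ≠ s ∧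
      hexAdj x y := by
  simp only [cell, Set.mem_insert_iff, Set.mem_singleton_iff, hexAdj, hexRel, Prod.ext_iff,
    ne_eq] at h ⊢
  rcases h with h | h | h
  · exact ⟨u, (u.1, u.2 + 1), (v.1, v.2 + 1), by omega⟩
  · exact ⟨(u.1, u.2 + 1), u, v, by omega⟩
  · exact ⟨v, (u.1 + 1, u.2), (v.1 + 1, v.2), by omega⟩

lemma exists_cell_bridge {u v : ℤ × ℤ} (h : hexAdj u v) :
    ∃ s x y, s ∈ cell u ∧ s ∈ cell v ∧ x ∈ cell u ∧ y ∈ cell v ∧ x ≠ s ∧ y ≠ s ∧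
      hexAdj x y := by
  rcases h with h | h
  · exact exists_cell_bridge_of_hexRel h
  · obtain ⟨s, x, y, hsv, hsu, hx, hy, hxs, hys, hxy⟩ := exists_cell_bridge_of_hexRel h
    exact ⟨s, y, x, hsu, hsv, hy, hx, hys, hxs, Or.symm hxy⟩

lemma reachable_of_adj_of_mem_cell {u v a b : ℤ × ℤ}
    (hu : u ∈ triangle n) (hv : v ∈ triangle n) (huv : hexAdj u v)
    (hcu : majority χ u = c) (hcv : majority χ v = c) (ha : a ∈ cell u) (hb : b ∈ cell v)
    (hca : χ a = c) (hcb : χ b = c) :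
    (hexGraphOn {x ∈ triangle (n + 1) | χ x = c}).Reachable a b := by
  obtain ⟨s, x, y, hsu, hsv, hx, hy, hxs, hys, hxy⟩ := exists_cell_bridge huv
  by_cases hcs : χ s = c
  · exact (reachable_of_mem_cell hu ha hsu hca hcs).trans
      (reachable_of_mem_cell hv hsv hb hcs hcb)
  · have hcx : χ x = c := (eq_or_eq_of_majority_eq hcu hx hsu hxs).resolve_right hcs
    have hcy : χ y = c := (eq_or_eq_of_majority_eq hcv hy hsv hys).resolve_right hcs
    have hxy : (hexGraphOn {x ∈ triangle (n + 1) | χ x = c}).Reachable x y :=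
      SimpleGraph.Adj.reachable ⟨hxy, ⟨mem_triangle_succ_of_mem_cell hu hx, hcx⟩,
        ⟨mem_triangle_succ_of_mem_cell hv hy, hcy⟩⟩
    exact ((reachable_of_mem_cell hu ha hx hca hcx).trans hxy).trans
      (reachable_of_mem_cell hv hy hb hcy hcb)

lemma reachable_of_reachable_majority {u v a b : ℤ × ℤ}
    (huv : (hexGraphOn {x ∈ triangle n | majority χ x = c}).Reachable u v)
    (hu : u ∈ triangle n) (ha : a ∈ cell u) (hb : b ∈ cell v) (hca : χ a = c) (hcb : χ b = c) :
    (hexGraphOn {x ∈ triangle (n + 1) | χ x = c}).Reachable a b := by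
  obtain ⟨p⟩ := huv
  induction p generalizing a with
  | nil => exact reachable_of_mem_cell hu ha hb hca hcb
  | @cons u w v h p ih =>
    obtain ⟨huw, ⟨-, hcu⟩, ⟨hw, hcw⟩⟩ := hexGraphOn_adj.mp h
    obtain ⟨a', ha', hca', -⟩ := exists_mem_cell_of_majority_eq (q := w) (r := (w.1 + 1, w.2))
      (P := fun _ => True) hcw (by simp [cell]) (by simp [cell]) (by simp [Prod.ext_iff]) trivial
      trivial
    exact (reachable_of_adj_of_mem_cell hu hw huw hcu hcw ha ha' hca hca').trans
      (ih hw ha' hb hca')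

end Majority

theorem exists_monochromatic_Y (n : ℕ) (χ : ℤ × ℤ → Bool) :
    ∃ (c : Bool) (u v w : ℤ × ℤ), u ∈ {x ∈ triangle (n + 1) | χ x = c} ∧
      v ∈ {x ∈ triangle (n + 1) | χ x = c} ∧ w ∈ {x ∈ triangle (n + 1) | χ x = c} ∧
      u.1 = 1 ∧ v.2 = 1 ∧ w.1 + w.2 = n + 2 ∧
      (hexGraphOn {x ∈ triangle (n + 1) | χ x = c}).Reachable u v ∧
      (hexGraphOn {x ∈ triangle (n + 1) | χ x = c}).Reachable u w := by
  induction n generalizing χ with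
  | zero =>
    have h11 : ((1, 1) : ℤ × ℤ) ∈ triangle 1 := by simp [triangle]
    exact ⟨χ (1, 1), (1, 1), (1, 1), (1, 1), ⟨h11, rfl⟩, ⟨h11, rfl⟩, ⟨h11, rfl⟩, rfl, rfl,
      by norm_num, .rfl, .rfl⟩
  | succ n ih =>
    obtain ⟨c, u, v, w, ⟨hu, hcu⟩, ⟨hv, hcv⟩, ⟨hw, hcw⟩, hu1, hv2, hwd, huv, huw⟩ :=
      ih (majority χ)
    obtain ⟨a, ha, hca, ha1⟩ := exists_mem_cell_of_majority_eq (q := u) (r := (u.1, u.2 + 1))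
      (P := fun x => x.1 = 1) hcu (by simp [cell]) (by simp [cell]) (by simp [Prod.ext_iff])
      hu1 hu1
    obtain ⟨b, hb, hcb, hb2⟩ := exists_mem_cell_of_majority_eq (q := v) (r := (v.1 + 1, v.2))
      (P := fun x => x.2 = 1) hcv (by simp [cell]) (by simp [cell]) (by simp [Prod.ext_iff])
      hv2 hv2
    obtain ⟨d, hd, hcd, hdd⟩ := exists_mem_cell_of_majority_eq (q := (w.1 + 1, w.2))
      (r := (w.1, w.2 + 1))
      (P := fun x => x.1 + x.2 = (n + 1 : ℕ) + 2) hcw (by simp [cell]) (by simp [cell])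
      (by simp [Prod.ext_iff]) (by dsimp only; omega) (by dsimp only; omega)
    exact ⟨c, a, b, d, ⟨mem_triangle_succ_of_mem_cell hu ha, hca⟩,
      ⟨mem_triangle_succ_of_mem_cell hv hb, hcb⟩, ⟨mem_triangle_succ_of_mem_cell hw hd, hcd⟩,
      ha1, hb2, hdd, reachable_of_reachable_majority huv hu ha hb hca hcb,
      reachable_of_reachable_majority huw hu ha hd hca hcd⟩

theorem exists_monochromatic_path_of_reachable {n : ℕ} (hn : 0 < n) {χ : ℤ × ℤ → Bool}
    {c : Bool} {S : Set (ℤ × ℤ)} (f : ℤ × ℤ → ℤ) (hf : ∀ x y, hexAdj x y → f y ≤ f x + 1)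
    (hS : ∀ x ∈ S, f x ≤ n → inGrid n x ∧ χ x = c) {a b : ℤ × ℤ}
    (hab : (hexGraphOn S).Reachable a b) (ha : a ∈ S) (hfa : f a = 1) (hfb : n ≤ f b) :
    ∃ (k : ℕ) (p : Fin k → ℤ × ℤ), n ≤ k ∧ Function.Injective p ∧
      (∀ t, inGrid n (p t)) ∧
      (∀ t s : Fin k, (t : ℕ) + 1 = (s : ℕ) → hexAdj (p t) (p s)) ∧
      (∀ t s : Fin k, χ (p t) = χ (p s)) := by
  classical
  obtain ⟨p⟩ := hab
  have hfG : ∀ x y, (hexGraphOn S).Adj x y → f y ≤ f x + 1 := fun x y h => hf x y h.1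
  obtain ⟨d, q, hq, hfd, hsub, hle⟩ := p.exists_path_to_level hfG (N := n) (by omega) hfb
  have hlen := q.le_add_length hfG
  have hmem : ∀ x ∈ q.support, inGrid n x ∧ χ x = c := fun x hx =>
    hS x (hexGraphOn.mem_of_mem_support p ha x (hsub hx)) (hle x hx)
  refine ⟨q.length + 1, fun t => q.getVert t, by omega, ?_,
    fun t => (hmem _ (q.getVert_mem_support t)).1, ?_,
    fun t s => by rw [(hmem _ (q.getVert_mem_support t)).2, (hmem _ (q.getVert_mem_support s)).2]⟩
  · intro t s h
    exact Fin.ext (hq.getVert_injOn (by simp; omega) (by simp; omega) h)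
  · intro t s hts
    have := (q.adj_getVert_succ (i := t) (by omega)).1
    rwa [hts] at this

def padColoring (n : ℕ) (χ : ℤ × ℤ → Bool) (p : ℤ × ℤ) : Bool :=
  if (n : ℤ) < p.1 then true else if (n : ℤ) < p.2 then false else χ p

lemma padColoring_eq_true {n : ℕ} {χ : ℤ × ℤ → Bool} {p : ℤ × ℤ}
    (h : padColoring n χ p = true) (hp : p.1 ≤ n) : p.2 ≤ n ∧ χ p = true := by
  unfold padColoring at h
  split_ifs at h with h₁ h₂
  · omega
  · exact ⟨by omega, h⟩

lemma padColoring_eq_false {n : ℕ} {χ : ℤ × ℤ → Bool} {p : ℤ × ℤ}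
    (h : padColoring n χ p = false) : p.1 ≤ n ∧ (p.2 ≤ n → χ p = false) := by
  unfold padColoring at h
  split_ifs at h with h₁ h₂
  · exact ⟨by omega, fun _ => by omega⟩
  · exact ⟨by omega, fun _ => h⟩

/-- Hex Lemma: any 2-colouring of the `n × n` hexagonal grid contains a
monochromatic path of length at least `n` (at least `n` vertices). -/
theorem stmt15 (n : ℕ) (hn : 0 < n) (χ : ℤ × ℤ → Bool) :
    ∃ (k : ℕ) (p : Fin k → ℤ × ℤ), n ≤ k ∧ Function.Injective p ∧
      (∀ t, inGrid n (p t)) ∧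
      (∀ t s : Fin k, (t : ℕ) + 1 = (s : ℕ) → hexAdj (p t) (p s)) ∧
      (∀ t s : Fin k, χ (p t) = χ (p s)) := by
  obtain ⟨m, rfl⟩ : ∃ m, n = m + 1 := ⟨n - 1, by omega⟩
  obtain ⟨c, u, v, w, hu, hv, hw, hu1, hv2, hwd, huv, huw⟩ :=
    exists_monochromatic_Y (2 * m) (padColoring (m + 1) χ)
  cases c
  · refine exists_monochromatic_path_of_reachable (c := false) hn Prod.snd
      (fun _ _ => hexAdj_snd_le) (fun x hx hx2 => ?_) (huv.symm.trans huw) hv hv2 ?_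
    · obtain ⟨hx, hcx⟩ := hx
      exact ⟨⟨hx.1, (padColoring_eq_false hcx).1, hx.2.1, hx2⟩, (padColoring_eq_false hcx).2 hx2⟩
    · have := (padColoring_eq_false hw.2).1
      push_cast at *
      omega
  · refine exists_monochromatic_path_of_reachable (c := true) hn Prod.fst
      (fun _ _ => hexAdj_fst_le) (fun x hx hx1 => ?_) huw hu hu1 ?_
    · obtain ⟨hx, hcx⟩ := hx
      exact ⟨⟨hx.1, hx1, hx.2.1, (padColoring_eq_true hcx hx1).1⟩,
        (padColoring_eq_true hcx hx1).2⟩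
    · by_contra! hlt
      have := (padColoring_eq_true hw.2 hlt.le).1
      push_cast at *
      omega
end

section
/- Let T be a rooted tree and P the path on vertices 1,...,m. Then the graph T⧄P has queue number at most 3: there is a vertex ordering and a partition of the edges into 3 classes such that no two edges of the same class nest. Explicitly, order (A,i) < (B,j) first by path position i<j, then by depth |A|<|B|, then lexicographically on the index arrays A,B; and place vertical, horizontal, and diagonal edges each in their own queue. -/
/-!
Within one class, the order of the edges' lower endpoints determines the order of their upper
endpoints: appending a child index (vertical edges), shifting along the path (horizontal edges),
or both (diagonal edges) preserves the vertex ordering. Two nesting edges would reverse it.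
-/

/-- Vertices of `T ⧄ P`: a tree node indexed by an integer array, together with
a path position. -/
abbrev TPv := List ℕ × ℕ

/-- The explicit vertex ordering on `T ⧄ P`: compare first by path position,
then by depth, then lexicographically on the index arrays. -/
def vOrd (p q : TPv) : Prop :=
  p.2 < q.2 ∨ (p.2 = q.2 ∧ (p.1.length < q.1.length ∨
    (p.1.length = q.1.length ∧ List.Lex (· < ·) p.1 q.1)))

/-- `x` lies strictly between `a` and `b` in the ordering. -/
def vBetween (x a b : TPv) : Prop := (vOrd a x ∧ vOrd x b) ∨ (vOrd b x ∧ vOrd x a)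

/-- Edges `{a,b}` and `{c,d}` nest: one edge's endpoints both lie strictly
between the other edge's endpoints. -/
def Nests (a b c d : TPv) : Prop :=
  (vBetween c a b ∧ vBetween d a b) ∨ (vBetween a c d ∧ vBetween b c d)

theorem List.Lex.append_singleton_of_length_eq {α : Type*} {r : α → α → Prop} {A B : List α}
    (h : List.Lex r A B) (hl : A.length = B.length) (v w : α) :
    List.Lex r (A ++ [v]) (B ++ [w]) := by
  induction h with
  | nil => simp at hl
  | rel h => exact .rel h
  | cons _ ih => exact .cons (ih (by simpa using hl))

section VertexOrder

variable {p q r : TPv}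

lemma vOrd_trans (h₁ : vOrd p q) (h₂ : vOrd q r) : vOrd p r := by
  unfold vOrd at *
  rcases h₁ with h₁ | ⟨e₁, h₁ | ⟨l₁, h₁⟩⟩ <;> rcases h₂ with h₂ | ⟨e₂, h₂ | ⟨l₂, h₂⟩⟩ <;>
    first | omega | exact Or.inr ⟨e₁.trans e₂, Or.inr ⟨l₁.trans l₂, List.lt_trans h₁ h₂⟩⟩

lemma vOrd_irrefl (p : TPv) : ¬ vOrd p p := by
  rintro (h | ⟨-, h | ⟨-, h⟩⟩)
  · exact h.false
  · exact h.false
  · exact List.lt_irrefl _ h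

lemma vOrd_asymm (h : vOrd p q) : ¬ vOrd q p :=
  fun h' => vOrd_irrefl p (vOrd_trans h h')

lemma vOrd_of_vBetween (hpq : vOrd p q) (hr : vBetween r p q) : vOrd p r ∧ vOrd r q :=
  hr.resolve_right fun ⟨hqr, hrp⟩ => vOrd_asymm hpq (vOrd_trans hqr hrp)

end VertexOrder

lemma nests_comm {a b c d : TPv} (h : Nests a b c d) : Nests b a d c :=
  h.imp (fun ⟨hc, hd⟩ => ⟨Or.symm hd, Or.symm hc⟩) (fun ⟨ha, hb⟩ => ⟨Or.symm hb, Or.symm ha⟩)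

lemma not_nests_of_vOrd {a b c d : TPv} (hab : vOrd a b) (hcd : vOrd c d)
    (hac : vOrd a c → ¬ vOrd d b) (hca : vOrd c a → ¬ vOrd b d) : ¬ Nests a b c d := by
  rintro (⟨hc, hd⟩ | ⟨ha, hb⟩)
  · exact hac (vOrd_of_vBetween hab hc).1 (vOrd_of_vBetween hab hd).2
  · exact hca (vOrd_of_vBetween hcd ha).1 (vOrd_of_vBetween hcd hb).2

section Edges

variable {A B : List ℕ} {i j : ℕ}

lemma vOrd_self_append_singleton (A : List ℕ) (v i : ℕ) : vOrd (A, i) (A ++ [v], i) := by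
  simp [vOrd]

lemma vOrd_succ_self (A : List ℕ) (i : ℕ) : vOrd (A, i) (A, i + 1) :=
  .inl i.lt_succ_self

lemma vOrd_append_singleton_succ (A : List ℕ) (v i : ℕ) : vOrd (A ++ [v], i) (A, i + 1) :=
  .inl i.lt_succ_self

lemma vOrd.append_singleton (h : vOrd (A, i) (B, j)) (v w : ℕ) :
    vOrd (A ++ [v], i) (B ++ [w], j) := by
  unfold vOrd at *
  simp only [List.length_append, List.length_singleton] at *
  rcases h with h | ⟨e, h | ⟨l, h⟩⟩
  · exact .inl h
  · exact .inr ⟨e, .inl (by omega)⟩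
  · exact .inr ⟨e, .inr ⟨by omega, h.append_singleton_of_length_eq l v w⟩⟩

lemma vOrd.succ (h : vOrd (A, i) (B, j)) : vOrd (A, i + 1) (B, j + 1) := by
  unfold vOrd at *
  simpa using h

lemma vOrd.not_vOrd_succ_of_append_singleton {v w : ℕ}
    (h : vOrd (A ++ [v], i) (B ++ [w], j)) : ¬ vOrd (B, j + 1) (A, i + 1) := by
  unfold vOrd at *
  simp only [List.length_append, List.length_singleton, add_lt_add_iff_right,
    add_left_inj] at *
  rintro (h' | ⟨e', h' | ⟨l', h'⟩⟩) <;> rcases h with h | ⟨e, h | ⟨l, h⟩⟩ <;> try omega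
  exact List.lt_asymm h (h'.append_singleton_of_length_eq l' w v)

end Edges

/-- `T ⧄ P` has queue number at most 3: under the explicit ordering `vOrd`,
placing the vertical edges `(A+v,i) ∼ (A,i)`, the horizontal edges
`(A,i) ∼ (A,i+1)` and the diagonal edges `(A+v,i) ∼ (A,i+1)` each in their own
queue, no two edges of the same class (with no shared endpoints) nest. -/
theorem stmt16 :
    (∀ (A B : List ℕ) (v w i j : ℕ),
      (A ++ [v], i) ≠ ((B ++ [w], j) : TPv) → (A ++ [v], i) ≠ ((B, j) : TPv) →
      ((A, i) : TPv) ≠ (B ++ [w], j) → ((A, i) : TPv) ≠ (B, j) →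
      ¬ Nests (A ++ [v], i) (A, i) (B ++ [w], j) (B, j)) ∧
    (∀ (A B : List ℕ) (i j : ℕ),
      ((A, i) : TPv) ≠ (B, j) → ((A, i) : TPv) ≠ (B, j + 1) →
      ((A, i + 1) : TPv) ≠ (B, j) → ((A, i + 1) : TPv) ≠ (B, j + 1) →
      ¬ Nests (A, i) (A, i + 1) (B, j) (B, j + 1)) ∧
    (∀ (A B : List ℕ) (v w i j : ℕ),
      (A ++ [v], i) ≠ ((B ++ [w], j) : TPv) → (A ++ [v], i) ≠ ((B, j + 1) : TPv) →
      ((A, i + 1) : TPv) ≠ (B ++ [w], j) → ((A, i + 1) : TPv) ≠ (B, j + 1) →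
      ¬ Nests (A ++ [v], i) (A, i + 1) (B ++ [w], j) (B, j + 1)) := by
  refine ⟨?vertical, ?horizontal, ?diagonal⟩
  case vertical =>
    intro A B v w i j _ _ _ _ h
    refine not_nests_of_vOrd (vOrd_self_append_singleton A v i) (vOrd_self_append_singleton B w j) ?_ ?_ (nests_comm h)
    · exact fun hAB => vOrd_asymm (hAB.append_singleton v w)
    · exact fun hBA => vOrd_asymm (hBA.append_singleton w v)
  case horizontal =>
    intro A B i j _ _ _ _
    refine not_nests_of_vOrd (vOrd_succ_self A i) (vOrd_succ_self B j) ?_ ?_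
    · exact fun hAB => vOrd_asymm hAB.succ
    · exact fun hBA => vOrd_asymm hBA.succ
  case diagonal =>
    intro A B v w i j _ _ _ _
    exact not_nests_of_vOrd (vOrd_append_singleton_succ A v i) (vOrd_append_singleton_succ B w j)
      (·.not_vOrd_succ_of_append_singleton) (·.not_vOrd_succ_of_append_singleton)
end
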